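/- arXiv:0803.3486 — 11 statements merged into one kernel-verified Lean document; each statement's English description precedes it below -/
import Mathlib

section
/- Let (μ,ν) be a family of type D_p^{(2)} in a group G, with p odd. Then for all k, l, t ∈ ℤ/p: (i) μ_k μ_l = μ_{t(l−k)+k} μ_{t(l−k)+l}; (ii) μ_k ν_l = μ_{2t(l−k)+k} ν_{2t(l−k)+l}; (iii) μ_k ν_l = ν_{(2t+1)(l−k)+k} μ_{(2t+1)(l−k)+l}. -/
/-!
Conjugation by `μ_i` or `ν_i` reflects indices through `i`, so `μ_a μ_b = μ_b μ_{2b-a}`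
and its mixed analogues hold. Hence the product of two consecutive terms of the
arithmetic progression `k, l, 2l - k, …` is unchanged when both are shifted by one step
(for mixed products, `μ` and `ν` alternate along the progression), and every `t ∈ ℤ/p`
is the image of an integer.
-/

section Reflection

variable {G R : Type*} [Group G] [CommRing R]

theorem mul_eq_mul_of_add_eq_two_mul {x y : R → G}
    (hxy : ∀ i j : R, x i * y j * (x i)⁻¹ = y (2 * i - j)) {a b c : R} (h : a + c = 2 * b) :
    y a * x b = x b * y c := by
  rw [show a = 2 * b - c by linear_combination h, ← hxy b c]
  group

variable {μ ν : R → G} (k l : R) (t : ℤ)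

theorem mul_eq_mul_shift (hμμ : ∀ i j : R, μ i * μ j * (μ i)⁻¹ = μ (2 * i - j)) :
    μ k * μ l = μ (t * (l - k) + k) * μ (t * (l - k) + l) := by
  let f : ℤ → G := fun n ↦ μ (n * (l - k) + k) * μ (n * (l - k) + l)
  have hf : Function.Periodic f 1 := fun n ↦ by
    symm
    simp only [f]
    rw [mul_eq_mul_of_add_eq_two_mul hμμ (c := ↑(n + 1) * (l - k) + l) (by push_cast; ring)]
    congr 2
    push_cast
    ring
  simpa [f] using (hf.int_mul_eq t).symm

theorem mul_eq_mul_shift_even (hμν : ∀ i j : R, μ i * ν j * (μ i)⁻¹ = ν (2 * i - j))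
    (hνμ : ∀ i j : R, ν i * μ j * (ν i)⁻¹ = μ (2 * i - j)) :
    μ k * ν l = μ (2 * t * (l - k) + k) * ν (2 * t * (l - k) + l) := by
  let f : ℤ → G := fun n ↦ μ (2 * n * (l - k) + k) * ν (2 * n * (l - k) + l)
  have hf : Function.Periodic f 1 := fun n ↦ by
    symm
    simp only [f]
    rw [mul_eq_mul_of_add_eq_two_mul hνμ (c := (2 * n + 1) * (l - k) + l) (by ring),
      show 2 * (n : R) * (l - k) + l = (2 * n + 1) * (l - k) + k by ring,
      mul_eq_mul_of_add_eq_two_mul hμν (c := 2 * ↑(n + 1) * (l - k) + l) (by push_cast; ring)]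
    congr 2
    push_cast
    ring
  simpa [f] using (hf.int_mul_eq t).symm

theorem mul_eq_mul_shift_odd (hμν : ∀ i j : R, μ i * ν j * (μ i)⁻¹ = ν (2 * i - j))
    (hνμ : ∀ i j : R, ν i * μ j * (ν i)⁻¹ = μ (2 * i - j)) :
    μ k * ν l = ν ((2 * t + 1) * (l - k) + k) * μ ((2 * t + 1) * (l - k) + l) := by
  rw [mul_eq_mul_shift_even k l t hμν hνμ,
    mul_eq_mul_of_add_eq_two_mul hνμ (c := (2 * t + 1) * (l - k) + l) (by ring)]
  congr 2
  ring

end Reflection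

theorem stmt3_general {G : Type*} [Group G] {p : ℕ}
    (μ ν : ZMod p → G)
    (hμμ : ∀ i j : ZMod p, μ i * μ j * (μ i)⁻¹ = μ (2 * i - j))
    (hμν : ∀ i j : ZMod p, μ i * ν j * (μ i)⁻¹ = ν (2 * i - j))
    (hνμ : ∀ i j : ZMod p, ν i * μ j * (ν i)⁻¹ = μ (2 * i - j)) :
    ∀ k l t : ZMod p,
      μ k * μ l = μ (t * (l - k) + k) * μ (t * (l - k) + l) ∧
      μ k * ν l = μ (2 * t * (l - k) + k) * ν (2 * t * (l - k) + l) ∧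
      μ k * ν l = ν ((2 * t + 1) * (l - k) + k) * μ ((2 * t + 1) * (l - k) + l) := by
  intro k l t
  obtain ⟨t, rfl⟩ := ZMod.intCast_surjective t
  exact ⟨mul_eq_mul_shift k l t hμμ, mul_eq_mul_shift_even k l t hμν hνμ,
    mul_eq_mul_shift_odd k l t hμν hνμ⟩

/-- For `p` odd and `(μ, ν)` of type `D_p^{(2)}` in a group `G`,
for all `k l t ∈ ℤ/p`:
(i) `μ_k μ_l = μ_{t(l−k)+k} μ_{t(l−k)+l}`;
(ii) `μ_k ν_l = μ_{2t(l−k)+k} ν_{2t(l−k)+l}`;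
(iii) `μ_k ν_l = ν_{(2t+1)(l−k)+k} μ_{(2t+1)(l−k)+l}`. -/
theorem stmt3 {G : Type*} [Group G] {p : ℕ} (hp : 1 ≤ p) (hodd : Odd p)
    (μ ν : ZMod p → G)
    (hμμ : ∀ i j : ZMod p, μ i * μ j * (μ i)⁻¹ = μ (2 * i - j))
    (hνν : ∀ i j : ZMod p, ν i * ν j * (ν i)⁻¹ = ν (2 * i - j))
    (hμν : ∀ i j : ZMod p, μ i * ν j * (μ i)⁻¹ = ν (2 * i - j))
    (hνμ : ∀ i j : ZMod p, ν i * μ j * (ν i)⁻¹ = μ (2 * i - j)) :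
    ∀ k l t : ZMod p,
      μ k * μ l = μ (t * (l - k) + k) * μ (t * (l - k) + l) ∧
      μ k * ν l = μ (2 * t * (l - k) + k) * ν (2 * t * (l - k) + l) ∧
      μ k * ν l = ν ((2 * t + 1) * (l - k) + k) * μ ((2 * t + 1) * (l - k) + l) :=
  stmt3_general μ ν hμμ hμν hνμ
end

section
/- Let p be odd and (μ,ν) a family of type D_p^{(2)} in a group G. Then μ_i ν_i = μ_0 ν_0 and ν_i μ_i = ν_0 μ_0 for all i ∈ ℤ/p. -/
/-!
Since `ν i` and `μ i` conjugate every `μ j` in the same way, `(μ i)⁻¹ * ν i` commutes with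
all `μ j`; and `μ i ^ 2` commutes with all `μ j` because conjugating by `μ i` is an involution
on the family. Conjugation by `μ i` therefore fixes both quantities while sending index `j` to
`2 * i - j`, so both are invariant under these reflections. For `p` odd, `2` is invertible in
`ZMod p`, so the reflections act transitively and both quantities are constant. Hence
`μ i * ν i = μ i ^ 2 * ((μ i)⁻¹ * ν i)` is constant, and `ν i * μ i = μ i * ν i`.
-/

theorem ZMod.apply_eq_apply_zero_of_reflect {α : Type*} {p : ℕ} (hp : Odd p)
    {f : ZMod p → α} (hf : ∀ i j, f (2 * i - j) = f j) (i : ZMod p) : f i = f 0 := by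
  obtain ⟨u, hu⟩ : IsUnit ((2 : ℕ) : ZMod p) :=
    (ZMod.isUnit_iff_coprime 2 p).mpr (Nat.coprime_two_left.mpr hp)
  have hi : 2 * (↑u⁻¹ * i) - 0 = i := by
    rw [sub_zero, ← mul_assoc, ← Nat.cast_ofNat, ← hu, Units.mul_inv, one_mul]
  rw [← hi, hf]

section DihedralFamily

variable {R G : Type*} [CommRing R] [Group G] {μ ν : R → G}

theorem commute_sq_of_conj_eq_reflect (hμμ : ∀ i j, μ i * μ j * (μ i)⁻¹ = μ (2 * i - j))
    (i j : R) : Commute (μ i ^ 2) (μ j) := by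
  have hback : μ i * μ (2 * i - j) * (μ i)⁻¹ = μ j := by
    rw [hμμ, sub_sub_cancel]
  rw [← hμμ i j] at hback
  calc μ i ^ 2 * μ j = μ i * (μ i * μ j * (μ i)⁻¹) * (μ i)⁻¹ * μ i ^ 2 := by rw [sq]; group
    _ = μ j * μ i ^ 2 := by rw [hback]

theorem sq_reflect_of_conj_eq_reflect (hμμ : ∀ i j, μ i * μ j * (μ i)⁻¹ = μ (2 * i - j))
    (i j : R) : μ (2 * i - j) ^ 2 = μ j ^ 2 := by
  rw [← hμμ, conj_pow, ← (commute_sq_of_conj_eq_reflect hμμ j i).eq, mul_inv_cancel_right]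

theorem commute_inv_mul_of_conj_eq_conj (hμμ : ∀ i j, μ i * μ j * (μ i)⁻¹ = μ (2 * i - j))
    (hνμ : ∀ i j, ν i * μ j * (ν i)⁻¹ = μ (2 * i - j)) (i j : R) :
    Commute ((μ i)⁻¹ * ν i) (μ j) := by
  have h : ν i * μ j * (ν i)⁻¹ = μ i * μ j * (μ i)⁻¹ := (hνμ i j).trans (hμμ i j).symm
  calc (μ i)⁻¹ * ν i * μ j = (μ i)⁻¹ * (ν i * μ j * (ν i)⁻¹) * ν i := by group
    _ = μ j * ((μ i)⁻¹ * ν i) := by rw [h]; group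

theorem inv_mul_reflect_of_conj_eq_reflect
    (hμμ : ∀ i j, μ i * μ j * (μ i)⁻¹ = μ (2 * i - j))
    (hμν : ∀ i j, μ i * ν j * (μ i)⁻¹ = ν (2 * i - j))
    (hνμ : ∀ i j, ν i * μ j * (ν i)⁻¹ = μ (2 * i - j)) (i j : R) :
    (μ (2 * i - j))⁻¹ * ν (2 * i - j) = (μ j)⁻¹ * ν j := by
  rw [← hμμ i j, ← hμν i j]
  calc (μ i * μ j * (μ i)⁻¹)⁻¹ * (μ i * ν j * (μ i)⁻¹)
      = μ i * ((μ j)⁻¹ * ν j) * (μ i)⁻¹ := by group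
    _ = (μ j)⁻¹ * ν j := by
      rw [← (commute_inv_mul_of_conj_eq_conj hμμ hνμ j i).eq, mul_inv_cancel_right]

end DihedralFamily

theorem stmt4_general {G : Type*} [Group G] {p : ℕ} (hodd : Odd p)
    (μ ν : ZMod p → G)
    (hμμ : ∀ i j : ZMod p, μ i * μ j * (μ i)⁻¹ = μ (2 * i - j))
    (hμν : ∀ i j : ZMod p, μ i * ν j * (μ i)⁻¹ = ν (2 * i - j))
    (hνμ : ∀ i j : ZMod p, ν i * μ j * (ν i)⁻¹ = μ (2 * i - j)) :
    ∀ i : ZMod p, μ i * ν i = μ 0 * ν 0 ∧ ν i * μ i = ν 0 * μ 0 := by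
  have hcomm : ∀ i, ν i * μ i = μ i * ν i := fun i => by
    simpa [two_mul, mul_inv_eq_iff_eq_mul] using hνμ i i
  have hsq := ZMod.apply_eq_apply_zero_of_reflect hodd
    (f := fun i => μ i ^ 2) (sq_reflect_of_conj_eq_reflect hμμ)
  have hinv := ZMod.apply_eq_apply_zero_of_reflect hodd
    (f := fun i => (μ i)⁻¹ * ν i) (inv_mul_reflect_of_conj_eq_reflect hμμ hμν hνμ)
  have hprod : ∀ i, μ i * ν i = μ 0 * ν 0 := fun i => by
    calc μ i * ν i = μ i ^ 2 * ((μ i)⁻¹ * ν i) := by group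
      _ = μ 0 ^ 2 * ((μ 0)⁻¹ * ν 0) := by rw [hsq i, hinv i]
      _ = μ 0 * ν 0 := by group
  exact fun i => ⟨hprod i, by rw [hcomm, hcomm, hprod]⟩

/-- For `p` odd and `(μ, ν)` of type `D_p^{(2)}` in a group `G`,
`μ_i ν_i = μ_0 ν_0` and `ν_i μ_i = ν_0 μ_0` for all `i ∈ ℤ/p`. -/
theorem stmt4 {G : Type*} [Group G] {p : ℕ} (hp : 1 ≤ p) (hodd : Odd p)
    (μ ν : ZMod p → G)
    (hμμ : ∀ i j : ZMod p, μ i * μ j * (μ i)⁻¹ = μ (2 * i - j))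
    (hνν : ∀ i j : ZMod p, ν i * ν j * (ν i)⁻¹ = ν (2 * i - j))
    (hμν : ∀ i j : ZMod p, μ i * ν j * (μ i)⁻¹ = ν (2 * i - j))
    (hνμ : ∀ i j : ZMod p, ν i * μ j * (ν i)⁻¹ = μ (2 * i - j)) :
    ∀ i : ZMod p, μ i * ν i = μ 0 * ν 0 ∧ ν i * μ i = ν 0 * μ 0 :=
  stmt4_general hodd μ ν hμμ hμν hνμ
end

section
/- Let p be odd and (μ,ν) of type D_p^{(2)} in a group G. Then for all k, l ∈ ℤ/p and all r ∈ ℤ/p: μ_k μ_l = μ_{k+r} μ_{l+r}, μ_k ν_l = μ_{k+r} ν_{l+r}, and μ_k ν_l = ν_{k+r} μ_{l+r}. -/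
/-!
Let `t = μ 1 * μ 0`. The relations give `μ (i + 1) * μ i = μ (i + 2) * μ (i + 1)` and
`μ i * μ (i + 1) = μ (i + 1) * μ (i + 2)`, so both products are independent of `i`; in particular
`t = μ (i + 1) * μ i` for every `i`. Conjugation by `t` is the composite of two reflections, so it
shifts the indices of both `μ` and `ν` by `2`; on the other hand the two constancy statements show
that `t` commutes with every product `μ k * ν l`. Hence these products are invariant under the
simultaneous shift of `k` and `l` by `2`, which generates `ℤ/p` when `p` is odd.
-/

open Function

theorem ZMod.isUnit_two_of_odd {n : ℕ} (hn : Odd n) : IsUnit (2 : ZMod n) := by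
  exact_mod_cast (ZMod.isUnit_iff_coprime 2 n).mpr hn.coprime_two_left

theorem Function.Periodic.of_isUnit {α : Type*} {n : ℕ} {f : ZMod n → α} {a : ZMod n}
    (hf : Periodic f a) (ha : IsUnit a) (r : ZMod n) : Periodic f r := by
  obtain ⟨u, rfl⟩ := ha
  obtain ⟨m, hm⟩ := ZMod.intCast_surjective (r * ((u⁻¹ : (ZMod n)ˣ) : ZMod n))
  have hr : r = m * u := by rw [hm, Units.inv_mul_cancel_right]
  exact hr ▸ hf.int_mul m

section DihedralConjugation

variable {G : Type*} [Group G] {n : ℕ}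

/-- A pair `(μ, ν)` is of type `D_p^{(2)}` when `ConjReflects x y` holds for all `x, y ∈ {μ, ν}`. -/
def ConjReflects (μ ν : ZMod n → G) : Prop :=
  ∀ i j, μ i * ν j * (μ i)⁻¹ = ν (2 * i - j)

variable {μ ν : ZMod n → G}

namespace ConjReflects

theorem mul_eq (h : ConjReflects μ ν) (i j : ZMod n) : μ i * ν j = ν (2 * i - j) * μ i := by
  rw [← h i j, inv_mul_cancel_right]

theorem mul_mul_apply (h : ConjReflects μ ν) (i : ZMod n) :
    μ 1 * μ 0 * ν i = ν (i + 2) * (μ 1 * μ 0) := by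
  rw [mul_assoc, h.mul_eq 0, ← mul_assoc, h.mul_eq 1, mul_assoc,
    show (2 : ZMod n) * 1 - (2 * 0 - i) = i + 2 by ring]

theorem apply_add_one_mul (h : ConjReflects μ μ) (i : ZMod n) :
    μ (i + 1) * μ i = μ 1 * μ 0 := by
  have hper : Periodic (fun i => μ (i + 1) * μ i) 1 := fun j => by
    change μ (j + 1 + 1) * μ (j + 1) = μ (j + 1) * μ j
    rw [h.mul_eq (j + 1) j, show 2 * (j + 1) - j = j + 1 + 1 by ring]
  simpa using hper.of_isUnit isUnit_one i 0

theorem mul_apply_add_one (h : ConjReflects μ μ) (i : ZMod n) :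
    μ i * μ (i + 1) = μ 0 * μ 1 := by
  have hper : Periodic (fun i => μ i * μ (i + 1)) 1 := fun j => by
    change μ (j + 1) * μ (j + 1 + 1) = μ j * μ (j + 1)
    rw [h.mul_eq (j + 1) (j + 1 + 1), show 2 * (j + 1) - (j + 1 + 1) = j by ring]
  simpa using hper.of_isUnit isUnit_one i 0

theorem commute_mul_mul (hμ : ConjReflects μ μ) (hνμ : ConjReflects ν μ) (k l : ZMod n) :
    Commute (μ 1 * μ 0) (μ k * ν l) := by
  have hk : μ 1 * μ 0 = μ k * μ (k - 1) := by simpa using (hμ.apply_add_one_mul (k - 1)).symm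
  have hl : μ 1 * μ 0 = μ l * μ (l - 1) := by simpa using (hμ.apply_add_one_mul (l - 1)).symm
  have hkl : μ (k - 1) * μ k = μ l * μ (l + 1) := by
    simpa using (hμ.mul_apply_add_one (k - 1)).trans (hμ.mul_apply_add_one l).symm
  have hνl : μ (l + 1) * ν l = ν l * μ (l - 1) := by
    rw [hνμ.mul_eq l (l - 1), show 2 * l - (l - 1) = l + 1 by ring]
  calc μ 1 * μ 0 * (μ k * ν l) = μ k * (μ (k - 1) * μ k) * ν l := by rw [hk]; group
    _ = μ k * μ l * (μ (l + 1) * ν l) := by rw [hkl]; group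
    _ = μ k * (μ l * ν l) * μ (l - 1) := by rw [hνl]; group
    _ = μ k * (ν l * μ l) * μ (l - 1) := by rw [hνμ.mul_eq l l, show 2 * l - l = l by ring]
    _ = μ k * ν l * (μ 1 * μ 0) := by rw [hl]; group

theorem mul_eq_mul_add (hμ : ConjReflects μ μ) (hμν : ConjReflects μ ν) (hνμ : ConjReflects ν μ)
    (h2 : IsUnit (2 : ZMod n)) (k l r : ZMod n) : μ k * ν l = μ (k + r) * ν (l + r) := by
  have hper : Periodic (fun i => μ (k + i) * ν (l + i)) 2 := fun j => by
    refine mul_right_cancel (b := μ 1 * μ 0) ?_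
    calc μ (k + (j + 2)) * ν (l + (j + 2)) * (μ 1 * μ 0)
        = μ (k + j + 2) * (ν (l + j + 2) * (μ 1 * μ 0)) := by
          rw [← add_assoc k, ← add_assoc l, mul_assoc]
      _ = μ 1 * μ 0 * (μ (k + j) * ν (l + j)) := by
          rw [← hμν.mul_mul_apply, ← mul_assoc, ← hμ.mul_mul_apply, mul_assoc]
      _ = μ (k + j) * ν (l + j) * (μ 1 * μ 0) := (hμ.commute_mul_mul hνμ _ _).eq
  simpa using (hper.of_isUnit h2 r 0).symm

theorem mul_eq_swap_mul_add (hμ : ConjReflects μ μ) (hμν : ConjReflects μ ν)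
    (hνμ : ConjReflects ν μ) (h2 : IsUnit (2 : ZMod n)) (k l r : ZMod n) :
    μ k * ν l = ν (k + r) * μ (l + r) := by
  rw [hνμ.mul_eq, mul_eq_mul_add hμ hμν hνμ h2 k l (k + r - l)]
  congr 2 <;> ring

end ConjReflects

end DihedralConjugation

theorem stmt5_general {G : Type*} [Group G] {p : ℕ} (hodd : Odd p)
    (μ ν : ZMod p → G)
    (hμμ : ∀ i j : ZMod p, μ i * μ j * (μ i)⁻¹ = μ (2 * i - j))
    (hμν : ∀ i j : ZMod p, μ i * ν j * (μ i)⁻¹ = ν (2 * i - j))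
    (hνμ : ∀ i j : ZMod p, ν i * μ j * (ν i)⁻¹ = μ (2 * i - j)) :
    ∀ k l r : ZMod p,
      μ k * μ l = μ (k + r) * μ (l + r) ∧
      μ k * ν l = μ (k + r) * ν (l + r) ∧
      μ k * ν l = ν (k + r) * μ (l + r) := by
  have hμμ' : ConjReflects μ μ := hμμ
  have hμν' : ConjReflects μ ν := hμν
  have hνμ' : ConjReflects ν μ := hνμ
  have h2 := ZMod.isUnit_two_of_odd hodd
  intro k l r
  exact ⟨hμμ'.mul_eq_mul_add hμμ' hμμ' h2 k l r, hμμ'.mul_eq_mul_add hμν' hνμ' h2 k l r,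
    hμμ'.mul_eq_swap_mul_add hμν' hνμ' h2 k l r⟩

/-- For `p` odd and `(μ, ν)` of type `D_p^{(2)}` in a group `G`,
for all `k l r ∈ ℤ/p`: `μ_k μ_l = μ_{k+r} μ_{l+r}`, `μ_k ν_l = μ_{k+r} ν_{l+r}`
and `μ_k ν_l = ν_{k+r} μ_{l+r}`. -/
theorem stmt5 {G : Type*} [Group G] {p : ℕ} (hp : 1 ≤ p) (hodd : Odd p)
    (μ ν : ZMod p → G)
    (hμμ : ∀ i j : ZMod p, μ i * μ j * (μ i)⁻¹ = μ (2 * i - j))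
    (hνν : ∀ i j : ZMod p, ν i * ν j * (ν i)⁻¹ = ν (2 * i - j))
    (hμν : ∀ i j : ZMod p, μ i * ν j * (μ i)⁻¹ = ν (2 * i - j))
    (hνμ : ∀ i j : ZMod p, ν i * μ j * (ν i)⁻¹ = μ (2 * i - j)) :
    ∀ k l r : ZMod p,
      μ k * μ l = μ (k + r) * μ (l + r) ∧
      μ k * ν l = μ (k + r) * ν (l + r) ∧
      μ k * ν l = ν (k + r) * μ (l + r) :=
  stmt5_general hodd μ ν hμμ hμν hνμ
end

section
/- Let p be odd, (μ,ν) of type D_p^{(2)} in a group G, and g∞ ∈ G with g∞ μ_0 g∞⁻¹ = ν_0. Define g_i = μ_{i/2} and f_i = ν_{i/2} g∞ (division by 2 in ℤ/p). Then for all i, j ∈ ℤ/p: (a) g_{2i−j}⁻¹ μ_i g_j = μ_0 and f_{2i−j}⁻¹ ν_i f_j = μ_0; (b) f_{2i−j}⁻¹ μ_i f_j = g∞⁻¹ μ_0 g∞; (c) g_{2i−j}⁻¹ ν_i g_j = ν_0. -/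
/-!
Conjugation by `μ_i` acts on indices as the reflection `j ↦ 2i - j`. Composing two reflections
gives the identity, so every square `μ_k²` is central among the `μ`'s, and as `2` is invertible all
squares are conjugate to `μ_0²`, hence equal. Then `μ_{x+1} μ_x⁻¹ = μ_x μ_{x-1}⁻¹`, and
telescoping along `ℤ/p` shows that `μ_x μ_y⁻¹` only depends on `x - y`, i.e.
`μ_x μ_y = μ_{x-y} μ_0`. Since `ν_x` and `μ_x` conjugate the `μ`'s in the same way, `μ_x⁻¹ ν_x`
centralizes them; conjugating by `μ_{x/2}` shows that it is a constant `z`, so `ν_x = μ_x z`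
and all four identities reduce to `μ_x μ_y = μ_{x-y} μ_0`.
-/

def IsDihedralFamily {R G : Type*} [CommRing R] [Group G] (μ : R → G) : Prop :=
  ∀ i j : R, μ i * μ j * (μ i)⁻¹ = μ (2 * i - j)

namespace IsDihedralFamily

variable {G : Type*} [Group G]

section CommRing

variable {R : Type*} [CommRing R] {μ : R → G}

theorem commute_sq (hμ : IsDihedralFamily μ) (k j : R) : Commute (μ k ^ 2) (μ j) := by
  calc μ k ^ 2 * μ j = μ k * (μ k * μ j * (μ k)⁻¹) * (μ k)⁻¹ * μ k ^ 2 := by rw [sq]; group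
    _ = μ j * μ k ^ 2 := by rw [hμ k j, hμ k, sub_sub_cancel]

theorem sq_eq_sq_zero (hμ : IsDihedralFamily μ) (h2 : IsUnit (2 : R)) (x : R) :
    μ x ^ 2 = μ 0 ^ 2 := by
  obtain ⟨c, rfl⟩ : 2 ∣ x := h2.dvd
  calc μ (2 * c) ^ 2 = (μ c * μ 0 * (μ c)⁻¹) ^ 2 := by rw [hμ c 0, sub_zero]
    _ = μ c * μ 0 ^ 2 * (μ c)⁻¹ := conj_pow
    _ = μ 0 ^ 2 := by rw [← (hμ.commute_sq 0 c).eq]; group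

theorem mul_inv_add_one_eq_mul_inv_sub_one (hμ : IsDihedralFamily μ) (h2 : IsUnit (2 : R))
    (x : R) :
    μ (x + 1) * (μ x)⁻¹ = μ x * (μ (x - 1))⁻¹ := by
  have hsq : μ x ^ 2 = μ (x - 1) ^ 2 := by
    rw [hμ.sq_eq_sq_zero h2 x, hμ.sq_eq_sq_zero h2 (x - 1)]
  calc μ (x + 1) * (μ x)⁻¹ = μ x * μ (x - 1) * (μ x ^ 2)⁻¹ := by
        rw [show x + 1 = 2 * x - (x - 1) by ring, ← hμ x (x - 1)]; group
    _ = μ x * (μ (x - 1))⁻¹ := by rw [hsq]; group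

theorem commute_inv_mul (hμ : IsDihedralFamily μ) {ν : R → G}
    (hνμ : ∀ i j, ν i * μ j * (ν i)⁻¹ = μ (2 * i - j)) (x y : R) :
    Commute ((μ x)⁻¹ * ν x) (μ y) :=
  calc (μ x)⁻¹ * ν x * μ y = (μ x)⁻¹ * (ν x * μ y * (ν x)⁻¹) * ν x := by group
    _ = (μ x)⁻¹ * (μ x * μ y * (μ x)⁻¹) * ν x := by rw [hνμ, hμ]
    _ = μ y * ((μ x)⁻¹ * ν x) := by group

theorem inv_mul_eq_inv_mul_zero (hμ : IsDihedralFamily μ) {ν : R → G}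
    (hμν : ∀ i j, μ i * ν j * (μ i)⁻¹ = ν (2 * i - j))
    (hνμ : ∀ i j, ν i * μ j * (ν i)⁻¹ = μ (2 * i - j)) (h2 : IsUnit (2 : R)) (x : R) :
    (μ x)⁻¹ * ν x = (μ 0)⁻¹ * ν 0 := by
  obtain ⟨c, rfl⟩ : 2 ∣ x := h2.dvd
  calc (μ (2 * c))⁻¹ * ν (2 * c) = (μ c * μ 0 * (μ c)⁻¹)⁻¹ * (μ c * ν 0 * (μ c)⁻¹) := by
        rw [hμ c 0, hμν c 0, sub_zero]
    _ = μ c * ((μ 0)⁻¹ * ν 0) * (μ c)⁻¹ := by group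
    _ = (μ 0)⁻¹ * ν 0 := by rw [← (hμ.commute_inv_mul hνμ 0 c).eq]; group

theorem exists_eq_mul_commute (hμ : IsDihedralFamily μ) {ν : R → G}
    (hμν : ∀ i j, μ i * ν j * (μ i)⁻¹ = ν (2 * i - j))
    (hνμ : ∀ i j, ν i * μ j * (ν i)⁻¹ = μ (2 * i - j)) (h2 : IsUnit (2 : R)) :
    ∃ z, (∀ y, z * μ y = μ y * z) ∧ ∀ x, ν x = μ x * z :=
  ⟨_, fun y ↦ (hμ.commute_inv_mul hνμ 0 y).eq, fun x ↦ by
    rw [← hμ.inv_mul_eq_inv_mul_zero hμν hνμ h2 x, mul_inv_cancel_left]⟩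

end CommRing

section ZMod

variable {n : ℕ} [NeZero n] {μ : ZMod n → G}

theorem mul_inv_add_one_eq_one_mul_inv_zero (hμ : IsDihedralFamily μ) (h2 : IsUnit (2 : ZMod n))
    (x : ZMod n) :
    μ (x + 1) * (μ x)⁻¹ = μ 1 * (μ 0)⁻¹ := by
  suffices ∀ m : ℕ, μ (m + 1) * (μ m)⁻¹ = μ 1 * (μ 0)⁻¹ by
    simpa only [ZMod.natCast_zmod_val] using this x.val
  intro m
  induction m with
  | zero => simp
  | succ m ih =>
    push_cast
    rw [hμ.mul_inv_add_one_eq_mul_inv_sub_one h2, add_sub_cancel_right, ih]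

theorem add_natCast_mul_inv (hμ : IsDihedralFamily μ) (h2 : IsUnit (2 : ZMod n))
    (x : ZMod n) (m : ℕ) : μ (x + m) * (μ x)⁻¹ = (μ 1 * (μ 0)⁻¹) ^ m := by
  induction m with
  | zero => simp
  | succ m ih =>
    calc μ (x + (m + 1 : ℕ)) * (μ x)⁻¹
        = μ (x + m + 1) * (μ (x + m))⁻¹ * (μ (x + m) * (μ x)⁻¹) := by push_cast; group
      _ = (μ 1 * (μ 0)⁻¹) ^ (m + 1) := by
          rw [hμ.mul_inv_add_one_eq_one_mul_inv_zero h2, ih, pow_succ']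

theorem mul_inv_eq (hμ : IsDihedralFamily μ) (h2 : IsUnit (2 : ZMod n)) (x y : ZMod n) :
    μ x * (μ y)⁻¹ = μ (x - y) * (μ 0)⁻¹ := by
  have hx : y + (x - y).val = x := by rw [ZMod.natCast_zmod_val]; ring
  have hxy : 0 + (x - y).val = x - y := by rw [ZMod.natCast_zmod_val, zero_add]
  conv_lhs => rw [← hx]
  conv_rhs => rw [← hxy]
  rw [hμ.add_natCast_mul_inv h2, hμ.add_natCast_mul_inv h2]

theorem mul_eq (hμ : IsDihedralFamily μ) (h2 : IsUnit (2 : ZMod n)) (x y : ZMod n) :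
    μ x * μ y = μ (x - y) * μ 0 := by
  calc μ x * μ y = μ x * (μ y)⁻¹ * μ y ^ 2 := by group
    _ = μ (x - y) * (μ 0)⁻¹ * μ 0 ^ 2 := by rw [hμ.mul_inv_eq h2, hμ.sq_eq_sq_zero h2]
    _ = μ (x - y) * μ 0 := by group

end ZMod

end IsDihedralFamily

theorem stmt6_general {G : Type*} [Group G] {p : ℕ} (hodd : Odd p)
    (μ ν : ZMod p → G) (ginf : G)
    (hμμ : ∀ i j : ZMod p, μ i * μ j * (μ i)⁻¹ = μ (2 * i - j))
    (hμν : ∀ i j : ZMod p, μ i * ν j * (μ i)⁻¹ = ν (2 * i - j))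
    (hνμ : ∀ i j : ZMod p, ν i * μ j * (ν i)⁻¹ = μ (2 * i - j))
    (hginf : ginf * μ 0 * ginf⁻¹ = ν 0)
    (g f : ZMod p → G)
    (hg : ∀ i : ZMod p, g i = μ ((2 : ZMod p)⁻¹ * i))
    (hf : ∀ i : ZMod p, f i = ν ((2 : ZMod p)⁻¹ * i) * ginf) :
    ∀ i j : ZMod p,
      (g (2 * i - j))⁻¹ * μ i * g j = μ 0 ∧
      (f (2 * i - j))⁻¹ * ν i * f j = μ 0 ∧
      (f (2 * i - j))⁻¹ * μ i * f j = ginf⁻¹ * μ 0 * ginf ∧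
      (g (2 * i - j))⁻¹ * ν i * g j = ν 0 := by
  have h2 : IsUnit (2 : ZMod p) :=
    (ZMod.isUnit_iff_coprime 2 p).mpr (Nat.coprime_two_left.mpr hodd)
  have : NeZero p := ⟨hodd.pos.ne'⟩
  have hμ : IsDihedralFamily μ := hμμ
  obtain ⟨z, hz, hν⟩ := hμ.exists_eq_mul_commute hμν hνμ h2
  intro i j
  have hx : (2 : ZMod p)⁻¹ * (2 * i - j) = i - 2⁻¹ * j := by
    rw [mul_sub, ← mul_assoc, ZMod.inv_mul_of_unit 2 h2, one_mul]
  rw [hg, hg, hf, hf, hx]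
  set x := i - 2⁻¹ * j
  set y := (2 : ZMod p)⁻¹ * j
  have hxy : μ i * μ y = μ x * μ 0 := hμ.mul_eq h2 i y
  refine ⟨?_, ?_, ?_, ?_⟩
  · rw [mul_assoc, hxy, inv_mul_cancel_left]
  · calc (ν x * ginf)⁻¹ * ν i * (ν y * ginf)
        = ginf⁻¹ * (μ x)⁻¹ * (μ i * μ y) * z * ginf := by
          rw [hν x, hν i, hν y, ← hz x, ← hz i]; group
      _ = ginf⁻¹ * (μ 0 * z) * ginf := by rw [hxy]; group
      _ = μ 0 := by rw [← hν 0, ← hginf]; group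
  · calc (ν x * ginf)⁻¹ * μ i * (ν y * ginf)
        = ginf⁻¹ * z⁻¹ * (μ x)⁻¹ * (μ i * μ y) * z * ginf := by rw [hν x, hν y]; group
      _ = ginf⁻¹ * z⁻¹ * (μ 0 * z) * ginf := by rw [hxy]; group
      _ = ginf⁻¹ * μ 0 * ginf := by rw [← hz]; group
  · calc (μ x)⁻¹ * ν i * μ y = (μ x)⁻¹ * μ i * (z * μ y) := by rw [hν i]; group
      _ = (μ x)⁻¹ * (μ i * μ y) * z := by rw [hz]; group
      _ = ν 0 := by rw [hxy, hν 0]; group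

/-- Let `p` be odd, `(μ, ν)` of type `D_p^{(2)}` in a group `G`,
and `g∞ ∈ G` with `g∞ μ_0 g∞⁻¹ = ν_0`.  With `g_i = μ_{i/2}` and
`f_i = ν_{i/2} g∞` (division by `2` in `ℤ/p`), for all `i j`:
(a) `g_{2i−j}⁻¹ μ_i g_j = μ_0` and `f_{2i−j}⁻¹ ν_i f_j = μ_0`;
(b) `f_{2i−j}⁻¹ μ_i f_j = g∞⁻¹ μ_0 g∞`;
(c) `g_{2i−j}⁻¹ ν_i g_j = ν_0`. -/
theorem stmt6 {G : Type*} [Group G] {p : ℕ} (hp : 1 ≤ p) (hodd : Odd p)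
    (μ ν : ZMod p → G) (ginf : G)
    (hμμ : ∀ i j : ZMod p, μ i * μ j * (μ i)⁻¹ = μ (2 * i - j))
    (hνν : ∀ i j : ZMod p, ν i * ν j * (ν i)⁻¹ = ν (2 * i - j))
    (hμν : ∀ i j : ZMod p, μ i * ν j * (μ i)⁻¹ = ν (2 * i - j))
    (hνμ : ∀ i j : ZMod p, ν i * μ j * (ν i)⁻¹ = μ (2 * i - j))
    (hginf : ginf * μ 0 * ginf⁻¹ = ν 0)
    (g f : ZMod p → G)
    (hg : ∀ i : ZMod p, g i = μ ((2 : ZMod p)⁻¹ * i))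
    (hf : ∀ i : ZMod p, f i = ν ((2 : ZMod p)⁻¹ * i) * ginf) :
    ∀ i j : ZMod p,
      (g (2 * i - j))⁻¹ * μ i * g j = μ 0 ∧
      (f (2 * i - j))⁻¹ * ν i * f j = μ 0 ∧
      (f (2 * i - j))⁻¹ * μ i * f j = ginf⁻¹ * μ 0 * ginf ∧
      (g (2 * i - j))⁻¹ * ν i * g j = ν 0 :=
  stmt6_general hodd μ ν ginf hμμ hμν hνμ hginf g f hg hf
end

section
/- Let (σ_i)_{1≤i≤3} and (τ_j)_{1≤j≤3} be triples in a group G each of type D₃ (conjugation of any two distinct members gives the third). If additionally σ₁ τ₁ σ₁⁻¹ = τ₁, σ₁ τ₂ σ₁⁻¹ = τ₃, and σ₂ τ₁ σ₂⁻¹ = τ₃, then σ_i τ_i σ_i⁻¹ = τ_i for i = 1,2,3, and σ_i τ_j σ_i⁻¹ = τ_k for all distinct i, j, k. -/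
/-!
Conjugation by `g` is an automorphism, so it carries `x y x⁻¹` to `x' y' x'⁻¹` whenever it carries
`x` to `x'` and `y` to `y'`. Applying this with `x` among the `σ`'s (using `σ₁ ▷ σ₂ = σ₃`,
`σ₂ ▷ σ₁ = σ₃` and `σ₃ ▷ σ₁ = σ₂`) or among the `τ`'s reads off the action of `σ₃` and then of `σ₂`
on the `τ`'s from that of `σ₁` and the single known value `σ₂ ▷ τ₁ = τ₃`.
-/

/-- A triple of (distinct) group elements of type `D₃`. -/
def IsD3 {G : Type*} [Group G] (a b c : G) : Prop :=
  (a ≠ b ∧ a ≠ c ∧ b ≠ c) ∧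
  (a * b * a⁻¹ = c ∧ a * c * a⁻¹ = b ∧ b * a * b⁻¹ = c ∧
   b * c * b⁻¹ = a ∧ c * a * c⁻¹ = b ∧ c * b * c⁻¹ = a)

theorem conj_conj_eq_of_conj_eq {G : Type*} [Group G] {g x y x' y' : G}
    (hx : g * x * g⁻¹ = x') (hy : g * y * g⁻¹ = y') :
    g * (x * y * x⁻¹) * g⁻¹ = x' * y' * x'⁻¹ := by
  rw [← hx, ← hy]
  group

/-- If `(σ₁,σ₂,σ₃)` and `(τ₁,τ₂,τ₃)` are triples of type `D₃` and
`σ₁ τ₁ σ₁⁻¹ = τ₁`, `σ₁ τ₂ σ₁⁻¹ = τ₃`, `σ₂ τ₁ σ₂⁻¹ = τ₃`, then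
`σ_i τ_i σ_i⁻¹ = τ_i` for `i = 1,2,3` and `σ_i τ_j σ_i⁻¹ = τ_k` for all
distinct `i, j, k`. -/
theorem stmt9 {G : Type*} [Group G] (σ₁ σ₂ σ₃ τ₁ τ₂ τ₃ : G)
    (hσ : IsD3 σ₁ σ₂ σ₃) (hτ : IsD3 τ₁ τ₂ τ₃)
    (h11 : σ₁ * τ₁ * σ₁⁻¹ = τ₁)
    (h12 : σ₁ * τ₂ * σ₁⁻¹ = τ₃)
    (h21 : σ₂ * τ₁ * σ₂⁻¹ = τ₃) :
    (σ₁ * τ₁ * σ₁⁻¹ = τ₁ ∧ σ₂ * τ₂ * σ₂⁻¹ = τ₂ ∧ σ₃ * τ₃ * σ₃⁻¹ = τ₃) ∧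
    (σ₁ * τ₂ * σ₁⁻¹ = τ₃ ∧ σ₁ * τ₃ * σ₁⁻¹ = τ₂ ∧
     σ₂ * τ₁ * σ₂⁻¹ = τ₃ ∧ σ₂ * τ₃ * σ₂⁻¹ = τ₁ ∧
     σ₃ * τ₁ * σ₃⁻¹ = τ₂ ∧ σ₃ * τ₂ * σ₃⁻¹ = τ₁) := by
  obtain ⟨-, hσ12, -, hσ21, -, hσ31, -⟩ := hσ
  obtain ⟨-, hτ12, hτ13, -, -, hτ31, hτ32⟩ := hτ
  have h13 : σ₁ * τ₃ * σ₁⁻¹ = τ₂ := by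
    rw [← hτ12, conj_conj_eq_of_conj_eq h11 h12, hτ13]
  have h33 : σ₃ * τ₃ * σ₃⁻¹ = τ₃ := by
    rw [← conj_conj_eq_of_conj_eq hσ21 h21, h11, h21]
  have h31 : σ₃ * τ₁ * σ₃⁻¹ = τ₂ := by
    rw [← conj_conj_eq_of_conj_eq hσ12 h11, h21, h13]
  have h32 : σ₃ * τ₂ * σ₃⁻¹ = τ₁ := by
    rw [← hτ31, conj_conj_eq_of_conj_eq h33 h31, hτ32]
  have h23 : σ₂ * τ₃ * σ₂⁻¹ = τ₁ := by
    rw [← conj_conj_eq_of_conj_eq hσ31 h33, h13, h32]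
  have h22 : σ₂ * τ₂ * σ₂⁻¹ = τ₂ := by
    rw [← conj_conj_eq_of_conj_eq hσ31 h31, h11, h31]
  exact ⟨⟨h11, h22, h33⟩, h12, h13, h21, h23, h31, h32⟩
end

section
/- Let σ₁,σ₂,σ₃,τ₁,τ₂,τ₃ ∈ G, all distinct, with both triples of type D₃. If σ₁ τ₁ σ₁⁻¹ = τ₁, σ₂ τ₁ σ₂⁻¹ = τ₃, and τ₁ σ₂ τ₁⁻¹ = σ₃ hold, then (σ,τ) is of type D₃^{(2)}: σ_i τ_j σ_i⁻¹ = τ_k and τ_i σ_j τ_i⁻¹ = σ_k whenever i, j, k are all equal or all distinct. -/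
/-- Six distinct group elements forming a family of type `D₃^{(2)}`: both
triples are of type `D₃`, and `σ_i ▷ τ_j = τ_k`, `τ_i ▷ σ_j = σ_k` whenever
`i, j, k` are all equal or all distinct. -/
def IsD32 {G : Type*} [Group G] (s₁ s₂ s₃ t₁ t₂ t₃ : G) : Prop :=
  IsD3 s₁ s₂ s₃ ∧ IsD3 t₁ t₂ t₃ ∧
  (s₁ ≠ t₁ ∧ s₁ ≠ t₂ ∧ s₁ ≠ t₃ ∧ s₂ ≠ t₁ ∧ s₂ ≠ t₂ ∧ s₂ ≠ t₃ ∧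
   s₃ ≠ t₁ ∧ s₃ ≠ t₂ ∧ s₃ ≠ t₃) ∧
  (s₁ * t₁ * s₁⁻¹ = t₁ ∧ s₂ * t₂ * s₂⁻¹ = t₂ ∧ s₃ * t₃ * s₃⁻¹ = t₃ ∧
   s₁ * t₂ * s₁⁻¹ = t₃ ∧ s₁ * t₃ * s₁⁻¹ = t₂ ∧
   s₂ * t₁ * s₂⁻¹ = t₃ ∧ s₂ * t₃ * s₂⁻¹ = t₁ ∧
   s₃ * t₁ * s₃⁻¹ = t₂ ∧ s₃ * t₂ * s₃⁻¹ = t₁) ∧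
  (t₁ * s₁ * t₁⁻¹ = s₁ ∧ t₂ * s₂ * t₂⁻¹ = s₂ ∧ t₃ * s₃ * t₃⁻¹ = s₃ ∧
   t₁ * s₂ * t₁⁻¹ = s₃ ∧ t₁ * s₃ * t₁⁻¹ = s₂ ∧
   t₂ * s₁ * t₂⁻¹ = s₃ ∧ t₂ * s₃ * t₂⁻¹ = s₁ ∧
   t₃ * s₁ * t₃⁻¹ = s₂ ∧ t₃ * s₂ * t₃⁻¹ = s₁)

/-! Conjugation is self-distributive, `x ▷ (y ▷ z) = (x ▷ y) ▷ (x ▷ z)`, so conjugating a known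
relation `y ▷ z = w` by a known element yields a new one. Starting from the `D₃` relations of
both triples and the three given mixed relations, each of the remaining mixed relations is
obtained in this way, one at a time. -/

section

variable {G : Type*} [Group G]

theorem conj_conj_distrib (x y z : G) :
    x * (y * z * y⁻¹) * x⁻¹ = (x * y * x⁻¹) * (x * z * x⁻¹) * (x * y * x⁻¹)⁻¹ := by
  group

theorem conj_eq_self_symm {x y : G} (h : x * y * x⁻¹ = y) : y * x * y⁻¹ = x := by
  rw [mul_inv_eq_iff_eq_mul, ← mul_inv_eq_iff_eq_mul.mp h]

theorem sigma₃_conj_tau₁_of_isD3 {σ₂ σ₃ τ₁ τ₂ τ₃ : G} (hτ : IsD3 τ₁ τ₂ τ₃)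
    (h2 : σ₂ * τ₁ * σ₂⁻¹ = τ₃) (h3 : τ₁ * σ₂ * τ₁⁻¹ = σ₃) : σ₃ * τ₁ * σ₃⁻¹ = τ₂ := by
  have h := conj_conj_distrib τ₁ σ₂ τ₁
  rw [h2, h3, mul_inv_cancel_right, hτ.2.2.1] at h
  exact h.symm

theorem sigma_conj_tau_of_isD3 {σ₁ σ₂ σ₃ τ₁ τ₂ τ₃ : G}
    (hσ : IsD3 σ₁ σ₂ σ₃) (hτ : IsD3 τ₁ τ₂ τ₃)
    (h1 : σ₁ * τ₁ * σ₁⁻¹ = τ₁) (h2 : σ₂ * τ₁ * σ₂⁻¹ = τ₃) (h4 : σ₃ * τ₁ * σ₃⁻¹ = τ₂) :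
    σ₁ * τ₁ * σ₁⁻¹ = τ₁ ∧ σ₂ * τ₂ * σ₂⁻¹ = τ₂ ∧ σ₃ * τ₃ * σ₃⁻¹ = τ₃ ∧
    σ₁ * τ₂ * σ₁⁻¹ = τ₃ ∧ σ₁ * τ₃ * σ₁⁻¹ = τ₂ ∧
    σ₂ * τ₁ * σ₂⁻¹ = τ₃ ∧ σ₂ * τ₃ * σ₂⁻¹ = τ₁ ∧
    σ₃ * τ₁ * σ₃⁻¹ = τ₂ ∧ σ₃ * τ₂ * σ₃⁻¹ = τ₁ := by
  obtain ⟨-, hs12, hs13, hs21, hs23, -, -⟩ := hσ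
  obtain ⟨-, -, ht13, -, ht23, -, -⟩ := hτ
  have e33 : σ₃ * τ₃ * σ₃⁻¹ = τ₃ := by
    have h := conj_conj_distrib σ₂ σ₁ τ₁; rw [h1, h2, hs21] at h; exact h.symm
  have e13 : σ₁ * τ₃ * σ₁⁻¹ = τ₂ := by
    have h := conj_conj_distrib σ₁ σ₂ τ₁; rw [h2, hs12, h1, h4] at h; exact h
  have e12 : σ₁ * τ₂ * σ₁⁻¹ = τ₃ := by
    have h := conj_conj_distrib σ₁ σ₃ τ₁; rw [h4, hs13, h1, h2] at h; exact h
  have e22 : σ₂ * τ₂ * σ₂⁻¹ = τ₂ := by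
    have h := conj_conj_distrib σ₂ σ₃ τ₁; rw [h4, hs23, h2, e13] at h; exact h
  have e32 : σ₃ * τ₂ * σ₃⁻¹ = τ₁ := by
    have h := conj_conj_distrib σ₃ τ₁ τ₃; rw [ht13, h4, e33, ht23] at h; exact h
  have e23 : σ₂ * τ₃ * σ₂⁻¹ = τ₁ := by
    have h := conj_conj_distrib σ₂ σ₁ τ₂; rw [e12, hs21, e22, e32] at h; exact h
  exact ⟨h1, e22, e33, e12, e13, h2, e23, h4, e32⟩

theorem tau_conj_sigma_of_isD3 {σ₁ σ₂ σ₃ τ₁ τ₂ τ₃ : G} (hσ : IsD3 σ₁ σ₂ σ₃)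
    (h1 : σ₁ * τ₁ * σ₁⁻¹ = τ₁) (h2 : σ₂ * τ₁ * σ₂⁻¹ = τ₃) (h3 : τ₁ * σ₂ * τ₁⁻¹ = σ₃)
    (h4 : σ₃ * τ₁ * σ₃⁻¹ = τ₂) :
    τ₁ * σ₁ * τ₁⁻¹ = σ₁ ∧ τ₂ * σ₂ * τ₂⁻¹ = σ₂ ∧ τ₃ * σ₃ * τ₃⁻¹ = σ₃ ∧
    τ₁ * σ₂ * τ₁⁻¹ = σ₃ ∧ τ₁ * σ₃ * τ₁⁻¹ = σ₂ ∧
    τ₂ * σ₁ * τ₂⁻¹ = σ₃ ∧ τ₂ * σ₃ * τ₂⁻¹ = σ₁ ∧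
    τ₃ * σ₁ * τ₃⁻¹ = σ₂ ∧ τ₃ * σ₂ * τ₃⁻¹ = σ₁ := by
  obtain ⟨-, -, -, hs21, hs23, hs31, hs32⟩ := hσ
  have f11 : τ₁ * σ₁ * τ₁⁻¹ = σ₁ := conj_eq_self_symm h1
  have f13 : τ₁ * σ₃ * τ₁⁻¹ = σ₂ := by
    have h := conj_conj_distrib τ₁ σ₂ σ₁; rw [hs21, h3, f11, hs31] at h; exact h
  have f21 : τ₂ * σ₁ * τ₂⁻¹ = σ₃ := by
    have h := conj_conj_distrib σ₃ τ₁ σ₂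
    rw [h3, h4, hs32, mul_inv_cancel_right] at h; exact h.symm
  have f22 : τ₂ * σ₂ * τ₂⁻¹ = σ₂ := by
    have h := conj_conj_distrib σ₃ τ₁ σ₁; rw [f11, h4, hs31] at h; exact h.symm
  have f23 : τ₂ * σ₃ * τ₂⁻¹ = σ₁ := by
    have h := conj_conj_distrib σ₃ τ₁ σ₃
    rw [f13, h4, mul_inv_cancel_right, hs32] at h; exact h.symm
  have f32 : τ₃ * σ₂ * τ₃⁻¹ = σ₁ := by
    have h := conj_conj_distrib σ₂ τ₁ σ₂
    rw [h3, h2, mul_inv_cancel_right, hs23] at h; exact h.symm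
  have f33 : τ₃ * σ₃ * τ₃⁻¹ = σ₃ := by
    have h := conj_conj_distrib σ₂ τ₁ σ₁; rw [f11, h2, hs21] at h; exact h.symm
  have f31 : τ₃ * σ₁ * τ₃⁻¹ = σ₂ := by
    have h := conj_conj_distrib σ₂ τ₁ σ₃
    rw [f13, h2, hs23, mul_inv_cancel_right] at h; exact h.symm
  exact ⟨f11, f22, f33, h3, f13, f21, f23, f31, f32⟩

end

/-- If `σ₁,σ₂,σ₃,τ₁,τ₂,τ₃` are all distinct, both triples are of
type `D₃`, and `σ₁ τ₁ σ₁⁻¹ = τ₁`, `σ₂ τ₁ σ₂⁻¹ = τ₃`, `τ₁ σ₂ τ₁⁻¹ = σ₃` hold,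
then `(σ, τ)` is of type `D₃^{(2)}`. -/
theorem stmt10 {G : Type*} [Group G] (σ₁ σ₂ σ₃ τ₁ τ₂ τ₃ : G)
    (hσ : IsD3 σ₁ σ₂ σ₃) (hτ : IsD3 τ₁ τ₂ τ₃)
    (hd : σ₁ ≠ τ₁ ∧ σ₁ ≠ τ₂ ∧ σ₁ ≠ τ₃ ∧ σ₂ ≠ τ₁ ∧ σ₂ ≠ τ₂ ∧ σ₂ ≠ τ₃ ∧
          σ₃ ≠ τ₁ ∧ σ₃ ≠ τ₂ ∧ σ₃ ≠ τ₃)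
    (h1 : σ₁ * τ₁ * σ₁⁻¹ = τ₁)
    (h2 : σ₂ * τ₁ * σ₂⁻¹ = τ₃)
    (h3 : τ₁ * σ₂ * τ₁⁻¹ = σ₃) :
    IsD32 σ₁ σ₂ σ₃ τ₁ τ₂ τ₃ := by
  have h4 := sigma₃_conj_tau₁_of_isD3 hτ h2 h3
  exact ⟨hσ, hτ, hd, sigma_conj_tau_of_isD3 hσ hτ h1 h2 h4, tau_conj_sigma_of_isD3 hσ h1 h2 h3 h4⟩
end

section
/- Let p be an odd prime, m ≥ 2p, and σ ∈ S_m whose cycle decomposition contains a j-cycle α = (i₁ ⋯ i_j) with 2p | j and j ≠ 4. Let P = (i₂ i₄ ⋯ i_j) and κ = j/(2p). Define σ_i := P^{iκ} σ P^{−iκ} for i ∈ ℤ/p. Then the σ_i are p distinct conjugates of σ satisfying σ_i σ_l σ_i⁻¹ = σ_{2i−l} for all i, l ∈ ℤ/p (a family of type D_p), and moreover σ_t ≠ σ_l⁻¹ for all t, l, so (σ_i) ∪ (σ_i⁻¹) is a family of type D_p^{(2)} contained in the conjugacy class of σ. -/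
/-! Write `σ_c = P^c σ P^{-c}` for `c ∈ ℤ`. Since `P` moves only the even entries of the cycle,
`σ_c` sends `x (2t) ↦ x (2(t - c) + 1)` and `x (2t + 1) ↦ x (2(t + c + 1))` and agrees with `σ`
off the cycle. Comparing both sides entrywise, `σ_c σ_d σ_c⁻¹ = σ_e` as soon as
`2(e + d - 2c) = 0` in `ℤ/j`; for exponents in `κℤ` and `j = 2pκ` this is the congruence
`e + d ≡ 2c (mod p)`. Evaluating at `x 0` shows that `σ_c` determines `2c` mod `j`, hence the
index mod `p`, and evaluating `σ_d σ_c` at `x 0` and `x 1` shows that `σ_c = σ_d⁻¹` forces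
`4 = 0` in `ℤ/j`, impossible for `j = 2pκ ≠ 4`. -/

open Equiv Equiv.Perm

theorem Equiv.Perm.zpow_apply_of_apply_eq_add_one {X R : Type*} [AddCommGroupWithOne R]
    {P : Perm X} {g : R → X} (h : ∀ a, P (g a) = g (a + 1)) (k : ℤ) (a : R) :
    (P ^ k) (g a) = g (a + k) := by
  induction k generalizing a with
  | zero => simp
  | succ k ih => rw [zpow_add_one, mul_apply, h, ih]; push_cast; exact congrArg g (by abel)
  | pred k ih =>
    have h' : P⁻¹ (g a) = g (a - 1) := by rw [inv_eq_iff_eq, h, sub_add_cancel]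
    rw [zpow_sub_one, mul_apply, h', ih]; push_cast; exact congrArg g (by abel)

theorem Equiv.Perm.apply_eq_of_mem_cycleFactorsFinset {X : Type*} [DecidableEq X] [Fintype X]
    {σ α : Perm X} (hα : α ∈ σ.cycleFactorsFinset) {y : X} (hy : α y ≠ y) : σ y = α y :=
  ((mem_cycleFactorsFinset_iff.mp hα).2 y (mem_support.mpr hy)).symm

theorem Equiv.Perm.isConj_inv {X : Type*} [DecidableEq X] [Fintype X] (σ : Perm X) :
    IsConj σ σ⁻¹ :=
  isConj_iff_cycleType_eq.mpr (cycleType_inv σ).symm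

theorem ZMod.exists_eq_two_mul_or_eq_two_mul_add_one {j : ℕ} (r : ZMod j) :
    ∃ t, r = 2 * t ∨ r = 2 * t + 1 := by
  obtain ⟨a, rfl⟩ := ZMod.intCast_surjective r
  obtain ⟨t, rfl | rfl⟩ := Int.even_or_odd' a
  exacts [⟨t, Or.inl (by push_cast; ring)⟩, ⟨t, Or.inr (by push_cast; ring)⟩]

theorem ZMod.intCast_two_mul_mul_eq_zero {p κ j : ℕ} (hj : j = 2 * p * κ) {a : ℤ}
    (ha : (a : ZMod p) = 0) : ((2 * κ * a : ℤ) : ZMod j) = 0 := by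
  rw [ZMod.intCast_zmod_eq_zero_iff_dvd] at ha ⊢
  obtain ⟨b, rfl⟩ := ha
  exact ⟨b, by rw [hj]; push_cast; ring⟩

theorem ZMod.intCast_eq_zero_of_two_mul_mul {p κ j : ℕ} (hj : j = 2 * p * κ) (hκ : κ ≠ 0)
    {a : ℤ} (ha : ((2 * κ * a : ℤ) : ZMod j) = 0) : (a : ZMod p) = 0 := by
  rw [ZMod.intCast_zmod_eq_zero_iff_dvd, hj] at *
  push_cast at ha
  rw [show (2 * p * κ : ℤ) = 2 * κ * p by ring] at ha
  exact (mul_dvd_mul_iff_left (by positivity)).mp ha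

theorem Equiv.Perm.ext_of_apply_two_mul {X : Type*} {j : ℕ} (x : ZMod j → X) {f g : Perm X}
    (heven : ∀ t, f (x (2 * t)) = g (x (2 * t)))
    (hodd : ∀ t, f (x (2 * t + 1)) = g (x (2 * t + 1)))
    (hout : ∀ y, (∀ r, y ≠ x r) → f y = g y) : f = g := by
  ext y
  by_cases hy : ∃ r, y = x r
  · obtain ⟨r, rfl⟩ := hy
    obtain ⟨t, rfl | rfl⟩ := ZMod.exists_eq_two_mul_or_eq_two_mul_add_one r
    exacts [heven t, hodd t]
  · exact hout y fun r hr => hy ⟨r, hr⟩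

structure IsEvenSubcycle {X : Type*} {j : ℕ} (x : ZMod j → X) (σ P : Perm X) : Prop where
  apply_entry : ∀ r, σ (x r) = x (r + 1)
  apply_even : ∀ r, Even r → P (x r) = x (r + 2)
  apply_odd : ∀ r, Odd r → P (x r) = x r
  apply_of_forall_ne : ∀ y, (∀ r, y ≠ x r) → P y = y

namespace IsEvenSubcycle

variable {X : Type*} {j : ℕ} {x : ZMod j → X} {σ P : Perm X}

theorem zpow_apply_two_mul (h : IsEvenSubcycle x σ P) (k : ℤ) (t : ZMod j) :
    (P ^ k) (x (2 * t)) = x (2 * (t + k)) :=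
  zpow_apply_of_apply_eq_add_one (g := fun t => x (2 * t))
    (fun a => by rw [h.apply_even _ (even_two_mul a), mul_add_one]) k t

theorem zpow_apply_two_mul_add_one (h : IsEvenSubcycle x σ P) (k : ℤ) (t : ZMod j) :
    (P ^ k) (x (2 * t + 1)) = x (2 * t + 1) :=
  zpow_apply_eq_self_of_apply_eq_self (h.apply_odd _ (odd_two_mul_add_one t)) k

theorem conj_apply_two_mul (h : IsEvenSubcycle x σ P) (c : ℤ) (t : ZMod j) :
    MulAut.conj (P ^ c) σ (x (2 * t)) = x (2 * (t - c) + 1) := by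
  rw [MulAut.conj_apply, mul_apply, mul_apply, ← zpow_neg, h.zpow_apply_two_mul, h.apply_entry,
    h.zpow_apply_two_mul_add_one]
  push_cast
  rw [sub_eq_add_neg]

theorem conj_apply_two_mul_add_one (h : IsEvenSubcycle x σ P) (c : ℤ) (t : ZMod j) :
    MulAut.conj (P ^ c) σ (x (2 * t + 1)) = x (2 * (t + c + 1)) := by
  rw [MulAut.conj_apply, mul_apply, mul_apply, ← zpow_neg, h.zpow_apply_two_mul_add_one,
    h.apply_entry, add_assoc, one_add_one_eq_two, ← mul_add_one, h.zpow_apply_two_mul,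
    add_right_comm]

theorem apply_ne_of_forall_ne (h : IsEvenSubcycle x σ P) {y : X} (hy : ∀ r, y ≠ x r) :
    ∀ r, σ y ≠ x r := by
  intro r
  rw [← sub_add_cancel r 1, ← h.apply_entry]
  exact fun hσ => hy _ (σ.injective hσ)

theorem conj_apply_of_forall_ne (h : IsEvenSubcycle x σ P) (c : ℤ) {y : X}
    (hy : ∀ r, y ≠ x r) : MulAut.conj (P ^ c) σ y = σ y := by
  rw [MulAut.conj_apply, mul_apply, mul_apply, ← zpow_neg,
    zpow_apply_eq_self_of_apply_eq_self (h.apply_of_forall_ne y hy),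
    zpow_apply_eq_self_of_apply_eq_self (h.apply_of_forall_ne _ (h.apply_ne_of_forall_ne hy))]

theorem conj_mul_conj_inv (h : IsEvenSubcycle x σ P) {c d e : ℤ}
    (hcde : 2 * ((e : ZMod j) + d - 2 * c) = 0) :
    MulAut.conj (P ^ c) σ * MulAut.conj (P ^ d) σ * (MulAut.conj (P ^ c) σ)⁻¹ =
      MulAut.conj (P ^ e) σ := by
  rw [mul_inv_eq_iff_eq_mul]
  refine ext_of_apply_two_mul x (fun t => ?_) (fun t => ?_) (fun y hy => ?_)
  · simp only [mul_apply, h.conj_apply_two_mul, h.conj_apply_two_mul_add_one]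
    congr 1
    linear_combination -hcde
  · simp only [mul_apply, h.conj_apply_two_mul, h.conj_apply_two_mul_add_one]
    congr 1
    linear_combination hcde
  · have hσy := h.apply_ne_of_forall_ne hy
    simp only [mul_apply, h.conj_apply_of_forall_ne _ hy, h.conj_apply_of_forall_ne _ hσy]

theorem two_mul_eq_of_conj_eq (h : IsEvenSubcycle x σ P) (hx : Function.Injective x) {c d : ℤ}
    (hcd : MulAut.conj (P ^ c) σ = MulAut.conj (P ^ d) σ) : 2 * (c : ZMod j) = 2 * d := by
  have h0 := DFunLike.congr_fun hcd (x (2 * 0))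
  rw [h.conj_apply_two_mul, h.conj_apply_two_mul] at h0
  linear_combination -hx h0

theorem conj_ne_inv_conj (h : IsEvenSubcycle x σ P) (hx : Function.Injective x)
    (h4 : (4 : ZMod j) ≠ 0) (c d : ℤ) : MulAut.conj (P ^ c) σ ≠ (MulAut.conj (P ^ d) σ)⁻¹ := by
  intro hcd
  have h0 : MulAut.conj (P ^ d) σ (MulAut.conj (P ^ c) σ (x (2 * 0))) = x (2 * 0) := by
    rw [hcd]
    exact Equiv.apply_symm_apply _ _
  have h1 : MulAut.conj (P ^ d) σ (MulAut.conj (P ^ c) σ (x (2 * 0 + 1))) = x (2 * 0 + 1) := by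
    rw [hcd]
    exact Equiv.apply_symm_apply _ _
  rw [h.conj_apply_two_mul, h.conj_apply_two_mul_add_one] at h0
  rw [h.conj_apply_two_mul_add_one, h.conj_apply_two_mul] at h1
  exact h4 (by linear_combination hx h0 + hx h1)

section Family

variable {p κ : ℕ} [NeZero p]

theorem conj_val_mul_conj_inv (h : IsEvenSubcycle x σ P) (hj : j = 2 * p * κ) (i l : ZMod p) :
    MulAut.conj (P ^ ((i.val * κ : ℕ) : ℤ)) σ * MulAut.conj (P ^ ((l.val * κ : ℕ) : ℤ)) σ *
        (MulAut.conj (P ^ ((i.val * κ : ℕ) : ℤ)) σ)⁻¹ =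
      MulAut.conj (P ^ (((2 * i - l).val * κ : ℕ) : ℤ)) σ := by
  apply h.conj_mul_conj_inv
  have := ZMod.intCast_two_mul_mul_eq_zero hj (a := (2 * i - l).val + l.val - 2 * i.val)
    (by push_cast [ZMod.natCast_zmod_val]; ring)
  push_cast at this ⊢
  linear_combination this

theorem injective_conj_val_mul (h : IsEvenSubcycle x σ P) (hx : Function.Injective x)
    (hj : j = 2 * p * κ) (hκ : κ ≠ 0) :
    Function.Injective fun i : ZMod p => MulAut.conj (P ^ ((i.val * κ : ℕ) : ℤ)) σ := by
  intro i l hil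
  have h2 := h.two_mul_eq_of_conj_eq hx hil
  have := ZMod.intCast_eq_zero_of_two_mul_mul hj hκ (a := i.val - l.val)
    (by push_cast at h2 ⊢; linear_combination h2)
  push_cast [ZMod.natCast_zmod_val] at this
  exact sub_eq_zero.mp this

end Family

end IsEvenSubcycle

theorem inv_conj_relations_of_conj_eq_reflect {G R : Type*} [Group G] [Ring R] {f : R → G}
    (hf : ∀ i l, f i * f l * (f i)⁻¹ = f (2 * i - l)) (i l : R) :
    f i * (f l)⁻¹ * (f i)⁻¹ = (f (2 * i - l))⁻¹ ∧
      (f i)⁻¹ * f l * f i = f (2 * i - l) ∧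
      (f i)⁻¹ * (f l)⁻¹ * f i = (f (2 * i - l))⁻¹ := by
  have hinv : (f i)⁻¹ * f l * f i = f (2 * i - l) := by
    have h := hf i (2 * i - l)
    rw [sub_sub_cancel] at h
    rw [← h]
    group
  refine ⟨?_, hinv, ?_⟩
  · rw [← hf i l]
    group
  · rw [← hinv]
    group

theorem stmt13_general {m p κ j : ℕ} (hp : p.Prime) (hκ : 1 ≤ κ) (hj : j = 2 * p * κ) (hj4 : j ≠ 4)
    (σ α P : Equiv.Perm (Fin m))
    (x : ZMod j → Fin m) (hx : Function.Injective x)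
    (hα : ∀ r : ZMod j, α (x r) = x (r + 1))
    (hcyc : α ∈ σ.cycleFactorsFinset)
    (hP : ∀ r : ZMod j, Even r → P (x r) = x (r + 2))
    (hP' : ∀ r : ZMod j, Odd r → P (x r) = x r)
    (hP'' : ∀ y : Fin m, (∀ r : ZMod j, y ≠ x r) → P y = y)
    (σfam : ZMod p → Equiv.Perm (Fin m))
    (hfam : ∀ i : ZMod p, σfam i = P ^ (i.val * κ) * σ * (P ^ (i.val * κ))⁻¹) :
    Function.Injective σfam ∧
    (∀ i : ZMod p, IsConj σ (σfam i) ∧ IsConj σ (σfam i)⁻¹) ∧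
    (∀ i l : ZMod p, σfam i * σfam l * (σfam i)⁻¹ = σfam (2 * i - l)) ∧
    (∀ t l : ZMod p, σfam t ≠ (σfam l)⁻¹) ∧
    (∀ i l : ZMod p,
      σfam i * (σfam l)⁻¹ * (σfam i)⁻¹ = (σfam (2 * i - l))⁻¹ ∧
      (σfam i)⁻¹ * σfam l * σfam i = σfam (2 * i - l) ∧
      (σfam i)⁻¹ * (σfam l)⁻¹ * σfam i = (σfam (2 * i - l))⁻¹) := by
  have : NeZero p := ⟨hp.ne_zero⟩
  have h4 : (4 : ZMod j) ≠ 0 := by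
    have := Nat.mul_le_mul (Nat.mul_le_mul_left 2 hp.two_le) hκ
    exact_mod_cast (ZMod.natCast_eq_zero_iff 4 j).not.mpr
      (Nat.not_dvd_of_pos_of_lt (by norm_num) (by omega))
  have hsub : IsEvenSubcycle x σ P := by
    refine ⟨fun r => ?_, hP, hP', hP''⟩
    have hr : α (x r) ≠ x r := by
      rw [hα]
      exact fun h => h4 (by linear_combination 4 * hx h)
    rw [apply_eq_of_mem_cycleFactorsFinset hcyc hr, hα]
  obtain rfl : σfam = fun i => MulAut.conj (P ^ ((i.val * κ : ℕ) : ℤ)) σ :=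
    funext fun i => by rw [hfam, MulAut.conj_apply, zpow_natCast]
  have hrel := hsub.conj_val_mul_conj_inv hj
  refine ⟨hsub.injective_conj_val_mul hx hj (by omega), fun i => ⟨isConj_iff.mpr ⟨_, rfl⟩, ?_⟩,
    hrel, fun t l => hsub.conj_ne_inv_conj hx h4 _ _, inv_conj_relations_of_conj_eq_reflect hrel⟩
  refine (isConj_inv σ).trans (isConj_iff.mpr ⟨P ^ ((i.val * κ : ℕ) : ℤ), ?_⟩)
  simp only [MulAut.conj_apply]
  group

/-- Let `p` be an odd prime, `m ≥ 2p`, and `σ ∈ S_m` whose cycle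
decomposition contains a `j`-cycle `α = (i₁ ⋯ i_j)` with `2p ∣ j`, `j ≠ 4`,
`j = 2pκ`.  Let `P = (i₂ i₄ ⋯ i_j)` be the cycle on the even-indexed entries
(entries encoded by an injective `x : ZMod j → Fin m`, `i_r = x r`).  With
`σ_i := P^{iκ} σ P^{−iκ}` for `i ∈ ℤ/p`, the `σ_i` are `p` distinct conjugates
of `σ` with `σ_i σ_l σ_i⁻¹ = σ_{2i−l}`, and `σ_t ≠ σ_l⁻¹` for all `t, l`, so
that `(σ_i) ∪ (σ_i⁻¹)` is a family of type `D_p^{(2)}` contained in the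
conjugacy class of `σ`. -/
theorem stmt13 {m p κ j : ℕ} (hp : p.Prime) (hodd : Odd p) (hm : 2 * p ≤ m)
    (hκ : 1 ≤ κ) (hj : j = 2 * p * κ) (hj4 : j ≠ 4)
    (σ α P : Equiv.Perm (Fin m))
    (x : ZMod j → Fin m) (hx : Function.Injective x)
    (hα : ∀ r : ZMod j, α (x r) = x (r + 1))
    (hα' : ∀ y : Fin m, (∀ r : ZMod j, y ≠ x r) → α y = y)
    (hcyc : α ∈ σ.cycleFactorsFinset)
    (hP : ∀ r : ZMod j, Even r → P (x r) = x (r + 2))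
    (hP' : ∀ r : ZMod j, Odd r → P (x r) = x r)
    (hP'' : ∀ y : Fin m, (∀ r : ZMod j, y ≠ x r) → P y = y)
    (σfam : ZMod p → Equiv.Perm (Fin m))
    (hfam : ∀ i : ZMod p, σfam i = P ^ (i.val * κ) * σ * (P ^ (i.val * κ))⁻¹) :
    Function.Injective σfam ∧
    (∀ i : ZMod p, IsConj σ (σfam i) ∧ IsConj σ (σfam i)⁻¹) ∧
    (∀ i l : ZMod p, σfam i * σfam l * (σfam i)⁻¹ = σfam (2 * i - l)) ∧
    (∀ t l : ZMod p, σfam t ≠ (σfam l)⁻¹) ∧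
    (∀ i l : ZMod p,
      σfam i * (σfam l)⁻¹ * (σfam i)⁻¹ = (σfam (2 * i - l))⁻¹ ∧
      (σfam i)⁻¹ * σfam l * σfam i = σfam (2 * i - l) ∧
      (σfam i)⁻¹ * (σfam l)⁻¹ * σfam i = (σfam (2 * i - l))⁻¹) :=
  stmt13_general hp hκ hj hj4 σ α P x hx hα hcyc hP hP' hP'' σfam hfam
end

section
/- Let q be a prime power with 3 | q−1, ω ∈ F_q a primitive third root of unity, and c ∈ F_q. For i ∈ ℤ/3 let μ_i be the 2×2 matrix over F_q with rows (0, ω^i) and (ω^{2i} c, 0). Then μ_i μ_j μ_i⁻¹ = μ_{2i−j} for all i, j ∈ ℤ/3, i.e., (μ_i)_{i∈ℤ/3} is a family of type D₃ in GL(2, F_q); if c = −1 each μ_i lies in SL(2, F_q). -/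
/-!
Each `μ_i` is antidiagonal with determinant `-ω^{3i} c = -c`, so it is invertible as soon as
`c` is, and has determinant `1` when `c = -1`. The product of two antidiagonal matrices is
diagonal: `μ_i μ_j = diag(ω^{i+2j} c, ω^{2i+j} c)`. Since exponents of `ω` only matter modulo
`3`, and `i + 2j ≡ 4i - j`, `2i + j ≡ 5i - 2j` modulo `3`, this equals `μ_{2i-j} μ_i`, which is
the conjugation relation after multiplying by `μ_i⁻¹` on the right.
-/

theorem pow_eq_pow_of_natCast_eq {M : Type*} [Monoid M] {x : M} {n a b : ℕ} (hx : x ^ n = 1)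
    (hab : (a : ZMod n) = b) : x ^ a = x ^ b := by
  rw [← pow_mod_orderOf x a, ← pow_mod_orderOf x b]
  exact congrArg (x ^ ·) <|
    Nat.ModEq.of_dvd (orderOf_dvd_of_pow_eq_one hx) ((ZMod.natCast_eq_natCast_iff _ _ _).1 hab)

section D3Family

variable {R : Type*} [CommRing R] {ω : R} (c : R)

variable (ω) in
def d3Matrix (i : ZMod 3) : Matrix (Fin 2) (Fin 2) R :=
  !![0, ω ^ i.val; ω ^ (2 * i.val) * c, 0]

theorem det_d3Matrix (hω : ω ^ 3 = 1) (i : ZMod 3) : (d3Matrix ω c i).det = -c := by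
  have : ω ^ i.val * (ω ^ (2 * i.val) * c) = (ω ^ 3) ^ i.val * c := by ring
  simp [d3Matrix, Matrix.det_fin_two_of, this, hω]

theorem isUnit_d3Matrix (hω : ω ^ 3 = 1) (hc : IsUnit c) (i : ZMod 3) :
    IsUnit (d3Matrix ω c i) := by
  rw [Matrix.isUnit_iff_isUnit_det, det_d3Matrix c hω]
  exact hc.neg

theorem d3Matrix_mul_d3Matrix_eq (i j : ZMod 3) :
    d3Matrix ω c i * d3Matrix ω c j =
      !![ω ^ (i.val + 2 * j.val) * c, 0; 0, ω ^ (2 * i.val + j.val) * c] := by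
  simp only [d3Matrix, Matrix.mul_fin_two, zero_mul, mul_zero, add_zero, zero_add]
  ring_nf

theorem d3Matrix_mul_d3Matrix (hω : ω ^ 3 = 1) (i j : ZMod 3) :
    d3Matrix ω c i * d3Matrix ω c j = d3Matrix ω c (2 * i - j) * d3Matrix ω c i := by
  have h3 : (3 : ZMod 3) = 0 := rfl
  rw [d3Matrix_mul_d3Matrix_eq, d3Matrix_mul_d3Matrix_eq,
    pow_eq_pow_of_natCast_eq hω (a := i.val + 2 * j.val) (b := (2 * i - j).val + 2 * i.val)
      (by push_cast [ZMod.natCast_zmod_val]; linear_combination (j - i) * h3),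
    pow_eq_pow_of_natCast_eq hω (a := 2 * i.val + j.val) (b := 2 * (2 * i - j).val + i.val)
      (by push_cast [ZMod.natCast_zmod_val]; linear_combination (j - i) * h3)]

theorem d3Matrix_mul_d3Matrix_mul_inv (hω : ω ^ 3 = 1) (hc : IsUnit c) (i j : ZMod 3) :
    d3Matrix ω c i * d3Matrix ω c j * (d3Matrix ω c i)⁻¹ = d3Matrix ω c (2 * i - j) := by
  rw [d3Matrix_mul_d3Matrix c hω, Matrix.mul_assoc,
    Matrix.mul_nonsing_inv _ ((Matrix.isUnit_iff_isUnit_det _).1 (isUnit_d3Matrix c hω hc i)),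
    Matrix.mul_one]

end D3Family

theorem stmt15_general {F : Type*} [Field F]
    (ω : F) (hω3 : ω ^ 3 = 1)
    (c : F) (hc : c ≠ 0)
    (μ : ZMod 3 → Matrix (Fin 2) (Fin 2) F)
    (hμ : ∀ i : ZMod 3, μ i = !![0, ω ^ i.val; ω ^ (2 * i.val) * c, 0]) :
    (∀ i : ZMod 3, IsUnit (μ i)) ∧
    (∀ i j : ZMod 3, μ i * μ j * (μ i)⁻¹ = μ (2 * i - j)) ∧
    (c = -1 → ∀ i : ZMod 3, (μ i).det = 1) := by
  obtain rfl : μ = d3Matrix ω c := funext hμ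
  refine ⟨isUnit_d3Matrix c hω3 hc.isUnit, d3Matrix_mul_d3Matrix_mul_inv c hω3 hc.isUnit, ?_⟩
  rintro rfl i
  rw [det_d3Matrix _ hω3, neg_neg]

/-- Let `F` be a finite field with `3 ∣ q − 1` (`q` the
cardinality), `ω ∈ F` a primitive third root of unity, and `c ∈ F` nonzero.
For `i ∈ ℤ/3` let `μ_i = !![0, ω^i; ω^{2i}·c, 0]`.  Then
`μ_i μ_j μ_i⁻¹ = μ_{2i−j}` for all `i, j ∈ ℤ/3` (a family of type `D₃` in
`GL(2, F)`, each `μ_i` being invertible), and if `c = −1` each `μ_i` has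
determinant `1`, i.e. lies in `SL(2, F)`. -/
theorem stmt15 {F : Type*} [Field F] [Fintype F]
    (hq : 3 ∣ Fintype.card F - 1)
    (ω : F) (hω3 : ω ^ 3 = 1) (hω1 : ω ≠ 1)
    (c : F) (hc : c ≠ 0)
    (μ : ZMod 3 → Matrix (Fin 2) (Fin 2) F)
    (hμ : ∀ i : ZMod 3, μ i = !![0, ω ^ i.val; ω ^ (2 * i.val) * c, 0]) :
    (∀ i : ZMod 3, IsUnit (μ i)) ∧
    (∀ i j : ZMod 3, μ i * μ j * (μ i)⁻¹ = μ (2 * i - j)) ∧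
    (c = -1 → ∀ i : ZMod 3, (μ i).det = 1) :=
  stmt15_general ω hω3 c hc μ hμ
end

section
/- Let (σ_i)_{1≤i≤6} be six distinct elements of a group G. If the ten relations σ₁▷σ₂=σ₅, σ₁▷σ₃=σ₂, σ₁▷σ₄=σ₃, σ₁▷σ₅=σ₄, σ₁▷σ₆=σ₆, σ₂▷σ₁=σ₃, σ₂▷σ₃=σ₆, σ₂▷σ₄=σ₄, σ₂▷σ₅=σ₁, σ₂▷σ₆=σ₅ hold (▷ denotes conjugation), then (σ_i) is of type 𝔒, i.e., σ_i ▷ σ_j = σ_{i▷j} for all 1 ≤ i, j ≤ 6, where i▷j is the octahedral rack operation. -/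
/-!
The rows of `σ₁` and `σ₂` in the type-𝔒 table are exactly the hypotheses (plus the trivial
`σ_i ▷ σ_i = σ_i`). If conjugation by `σ_x` and by `σ_y` acts on the family as `x ▷ ·` and `y ▷ ·`,
then so does conjugation by `σ_x ▷ σ_y`, by self-distributivity of the rack. Since `1` and `2`
generate the octahedral rack (`3 = 2 ▷ 1`, `4 = 3 ▷ 1`, `5 = 1 ▷ 2`, `6 = 2 ▷ 3`), every row follows.
-/

/-- The octahedral rack operation on `{1,…,6}` (encoded `0`-based on `Fin 6`). -/
def octo : Fin 6 → Fin 6 → Fin 6 := fun i j =>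
  ![![0, 4, 1, 2, 3, 5],
    ![2, 1, 5, 3, 0, 4],
    ![3, 0, 2, 5, 4, 1],
    ![4, 1, 0, 3, 5, 2],
    ![1, 5, 2, 0, 4, 3],
    ![0, 2, 3, 4, 1, 5]] i j

open Quandles

namespace Shelf

variable {R G : Type*} [Shelf R] [Group G]

def ConjCompatible (f : R → G) (x : R) : Prop :=
  ∀ j, f x * f j * (f x)⁻¹ = f (x ◃ j)

theorem ConjCompatible.act {f : R → G} {x y : R} (hx : ConjCompatible f x)
    (hy : ConjCompatible f y) (hsurj : Function.Surjective (x ◃ ·)) :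
    ConjCompatible f (x ◃ y) := by
  intro j
  obtain ⟨k, rfl⟩ := hsurj j
  calc f (x ◃ y) * f (x ◃ k) * (f (x ◃ y))⁻¹
      = f x * (f y * f k * (f y)⁻¹) * (f x)⁻¹ := by rw [← hx y, ← hx k]; group
    _ = f (x ◃ y ◃ k) := by rw [hy k, hx]
    _ = f ((x ◃ y) ◃ x ◃ k) := by rw [self_distrib]

end Shelf

abbrev octahedralShelf : Shelf (Fin 6) where
  act := octo
  self_distrib := by decide

theorem octo_surjective (i : Fin 6) : Function.Surjective (octo i) := by
  revert i; decide

theorem stmt17_general {G : Type*} [Group G] (σ : Fin 6 → G)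
    (e12 : σ 0 * σ 1 * (σ 0)⁻¹ = σ 4)
    (e13 : σ 0 * σ 2 * (σ 0)⁻¹ = σ 1)
    (e14 : σ 0 * σ 3 * (σ 0)⁻¹ = σ 2)
    (e15 : σ 0 * σ 4 * (σ 0)⁻¹ = σ 3)
    (e16 : σ 0 * σ 5 * (σ 0)⁻¹ = σ 5)
    (e21 : σ 1 * σ 0 * (σ 1)⁻¹ = σ 2)
    (e23 : σ 1 * σ 2 * (σ 1)⁻¹ = σ 5)
    (e24 : σ 1 * σ 3 * (σ 1)⁻¹ = σ 3)
    (e25 : σ 1 * σ 4 * (σ 1)⁻¹ = σ 0)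
    (e26 : σ 1 * σ 5 * (σ 1)⁻¹ = σ 4) :
    ∀ i j : Fin 6, σ i * σ j * (σ i)⁻¹ = σ (octo i j) := by
  let _ := octahedralShelf
  have h0 : Shelf.ConjCompatible σ 0 := by
    intro j
    fin_cases j
    exacts [mul_inv_cancel_right _ _, e12, e13, e14, e15, e16]
  have h1 : Shelf.ConjCompatible σ 1 := by
    intro j
    fin_cases j
    exacts [e21, mul_inv_cancel_right _ _, e23, e24, e25, e26]
  have h2 : Shelf.ConjCompatible σ 2 := h1.act h0 (octo_surjective 1)
  have h3 : Shelf.ConjCompatible σ 3 := h2.act h0 (octo_surjective 2)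
  have h4 : Shelf.ConjCompatible σ 4 := h0.act h1 (octo_surjective 0)
  have h5 : Shelf.ConjCompatible σ 5 := h1.act h2 (octo_surjective 1)
  intro i
  fin_cases i
  exacts [h0, h1, h2, h3, h4, h5]

/-- If six distinct elements `σ₁,…,σ₆` of a group `G` (here
`σ_i = σ (i−1)`) satisfy the ten relations `σ₁▷σ₂=σ₅`, `σ₁▷σ₃=σ₂`, `σ₁▷σ₄=σ₃`,
`σ₁▷σ₅=σ₄`, `σ₁▷σ₆=σ₆`, `σ₂▷σ₁=σ₃`, `σ₂▷σ₃=σ₆`, `σ₂▷σ₄=σ₄`, `σ₂▷σ₅=σ₁`,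
`σ₂▷σ₆=σ₅` (with `x ▷ y = x y x⁻¹`), then the family is of type `𝔒`:
`σ_i σ_j σ_i⁻¹ = σ_{i▷j}` for all `i, j`. -/
theorem stmt17 {G : Type*} [Group G] (σ : Fin 6 → G)
    (hinj : Function.Injective σ)
    (e12 : σ 0 * σ 1 * (σ 0)⁻¹ = σ 4)
    (e13 : σ 0 * σ 2 * (σ 0)⁻¹ = σ 1)
    (e14 : σ 0 * σ 3 * (σ 0)⁻¹ = σ 2)
    (e15 : σ 0 * σ 4 * (σ 0)⁻¹ = σ 3)
    (e16 : σ 0 * σ 5 * (σ 0)⁻¹ = σ 5)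
    (e21 : σ 1 * σ 0 * (σ 1)⁻¹ = σ 2)
    (e23 : σ 1 * σ 2 * (σ 1)⁻¹ = σ 5)
    (e24 : σ 1 * σ 3 * (σ 1)⁻¹ = σ 3)
    (e25 : σ 1 * σ 4 * (σ 1)⁻¹ = σ 0)
    (e26 : σ 1 * σ 5 * (σ 1)⁻¹ = σ 4) :
    ∀ i j : Fin 6, σ i * σ j * (σ i)⁻¹ = σ (octo i j) :=
  stmt17_general σ e12 e13 e14 e15 e16 e21 e23 e24 e25 e26
end

section
/- Let (σ_i)_{1≤i≤6} be a family of type 𝔒 in a group G. Then: (i) σ₁⁴ = σ₂⁴ = σ₃⁴ = σ₄⁴ = σ₅⁴ = σ₆⁴; (ii) σ₁σ₆ = σ₂σ₄ = σ₃σ₅; (iii) σ₂²σ₅² = σ₁³σ₆ = σ₃²σ₂²; (iv) σ₅²σ₂² = σ₁σ₆³ = σ₂²σ₃². -/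
/-- The antipodal vertex of the octahedron: the unique `j ≠ i` with `i ▷ j = j`. -/
def antipode : Fin 6 → Fin 6 := ![5, 3, 4, 1, 2, 0]

theorem octo_zero_octo_five : ∀ i, octo 0 (octo 5 i) = i := by decide

theorem antipode_octo : ∀ k i, antipode (octo k i) = octo k (antipode i) := by decide

theorem antipode_antipode : ∀ i, antipode (antipode i) = i := by decide

theorem exists_octo_octo_zero : ∀ i, ∃ k l, octo k (octo l 0) = i := by decide

theorem octo_octo_of_ne : ∀ i j, j ≠ i → j ≠ antipode i → octo i (octo i j) = antipode j := by
  decide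

theorem sq_eq_sq_of_mul_mul_eq {G : Type*} [Group G] {a b c : G} (hc : Commute c a)
    (hab : a * b * a = c * b) (hba : b * a * b = c * a) : a ^ 2 = b ^ 2 := by
  refine mul_left_cancel (a := c) ?_
  calc c * a ^ 2 = a * (c * a) := by rw [← mul_assoc, ← hc.eq, sq, mul_assoc]
    _ = a * b * a * b := by rw [← hba]; simp only [mul_assoc]
    _ = c * b ^ 2 := by rw [hab, sq, mul_assoc]

def IsOctahedral {G : Type*} [Group G] (σ : Fin 6 → G) : Prop :=
  ∀ i j, σ i * σ j * (σ i)⁻¹ = σ (octo i j)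

namespace IsOctahedral

variable {G : Type*} [Group G] {σ : Fin 6 → G}

theorem semiconjBy (hσ : IsOctahedral σ) (i j : Fin 6) :
    SemiconjBy (σ i) (σ j) (σ (octo i j)) :=
  mul_inv_eq_iff_eq_mul.mp (hσ i j)

theorem commute_center (hσ : IsOctahedral σ) (i : Fin 6) : Commute (σ 0 * σ 5) (σ i) := by
  have h := (hσ.semiconjBy 0 _).mul_left (hσ.semiconjBy 5 i)
  rwa [octo_zero_octo_five] at h

theorem mul_antipode (hσ : IsOctahedral σ) (i : Fin 6) :
    σ i * σ (antipode i) = σ 0 * σ 5 := by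
  have step : ∀ k i, σ i * σ (antipode i) = σ 0 * σ 5 →
      σ (octo k i) * σ (antipode (octo k i)) = σ 0 * σ 5 := by
    intro k i h
    have hk : SemiconjBy (σ k) (σ 0 * σ 5) (σ (octo k i) * σ (antipode (octo k i))) := by
      rw [← h, antipode_octo]
      exact (hσ.semiconjBy k i).mul_right (hσ.semiconjBy k _)
    exact mul_right_cancel (hk.eq.symm.trans (hσ.commute_center k).symm.eq)
  obtain ⟨k, l, rfl⟩ := exists_octo_octo_zero i
  exact step k _ (step l 0 rfl)

theorem sq_mul_sq_antipode (hσ : IsOctahedral σ) (i : Fin 6) :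
    σ i ^ 2 * σ (antipode i) ^ 2 = (σ 0 * σ 5) ^ 2 := by
  calc σ i ^ 2 * σ (antipode i) ^ 2 = σ i * (σ i * σ (antipode i)) * σ (antipode i) := by
        simp only [sq, mul_assoc]
    _ = σ 0 * σ 5 * (σ 0 * σ 5) := by
        rw [hσ.mul_antipode, (hσ.commute_center i).symm.eq, mul_assoc, hσ.mul_antipode]
    _ = (σ 0 * σ 5) ^ 2 := (sq _).symm

theorem semiconjBy_sq_of_ne (hσ : IsOctahedral σ) {i j : Fin 6} (hji : j ≠ i)
    (hj : j ≠ antipode i) : SemiconjBy (σ i ^ 2) (σ j) (σ (antipode j)) := by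
  rw [sq, ← octo_octo_of_ne i j hji hj]
  exact (hσ.semiconjBy i _).mul_left (hσ.semiconjBy i j)

theorem sq_mul_sq_mul_sq (hσ : IsOctahedral σ) {i j : Fin 6} (hji : j ≠ i)
    (hj : j ≠ antipode i) : σ j ^ 2 * σ i ^ 2 * σ j ^ 2 = (σ 0 * σ 5) ^ 2 * σ i ^ 2 := by
  rw [mul_assoc, ((hσ.semiconjBy_sq_of_ne hji hj).pow_right 2).eq, ← mul_assoc,
    hσ.sq_mul_sq_antipode]

theorem pow_four_eq (hσ : IsOctahedral σ) {i j : Fin 6} (hji : j ≠ i)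
    (hj : j ≠ antipode i) : σ i ^ 4 = σ j ^ 4 := by
  have hij : i ≠ antipode j := fun h => hj (by rw [h, antipode_antipode])
  have h := sq_eq_sq_of_mul_mul_eq ((hσ.commute_center i).pow_pow 2 2)
    (hσ.sq_mul_sq_mul_sq hji.symm hij) (hσ.sq_mul_sq_mul_sq hji hj)
  rwa [← pow_mul, ← pow_mul] at h

theorem sq_octo_mul_sq (hσ : IsOctahedral σ) {i j : Fin 6} (hji : j ≠ i)
    (hj : j ≠ antipode i) : σ (octo j i) ^ 2 * σ j ^ 2 = σ 0 * σ 5 * σ i ^ 2 := by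
  calc σ (octo j i) ^ 2 * σ j ^ 2 = σ (octo j i) * (σ (octo j i) * σ j) * σ j := by
        simp only [sq, mul_assoc]
    _ = σ j * (σ i ^ 2 * σ j) := by
        rw [← (hσ.semiconjBy j i).eq, ← mul_assoc, ← (hσ.semiconjBy j i).eq]
        simp only [sq, mul_assoc]
    _ = σ 0 * σ 5 * σ i ^ 2 := by
        rw [(hσ.semiconjBy_sq_of_ne hji hj).eq, ← mul_assoc, hσ.mul_antipode]

end IsOctahedral

theorem stmt18_general {G : Type*} [Group G] (σ : Fin 6 → G)
    (hO : ∀ i j : Fin 6, σ i * σ j * (σ i)⁻¹ = σ (octo i j)) :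
    (σ 0 ^ 4 = σ 1 ^ 4 ∧ σ 1 ^ 4 = σ 2 ^ 4 ∧ σ 2 ^ 4 = σ 3 ^ 4 ∧
      σ 3 ^ 4 = σ 4 ^ 4 ∧ σ 4 ^ 4 = σ 5 ^ 4) ∧
    (σ 0 * σ 5 = σ 1 * σ 3 ∧ σ 1 * σ 3 = σ 2 * σ 4) ∧
    (σ 1 ^ 2 * σ 4 ^ 2 = σ 0 ^ 3 * σ 5 ∧ σ 0 ^ 3 * σ 5 = σ 2 ^ 2 * σ 1 ^ 2) ∧
    (σ 4 ^ 2 * σ 1 ^ 2 = σ 0 * σ 5 ^ 3 ∧ σ 0 * σ 5 ^ 3 = σ 1 ^ 2 * σ 2 ^ 2) := by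
  have hσ : IsOctahedral σ := hO
  have h0 : σ 0 ^ 3 * σ 5 = σ 0 * σ 5 * σ 0 ^ 2 := by
    rw [pow_succ, mul_assoc, ((hσ.commute_center 0).pow_right 2).eq]
  have h5 : σ 0 * σ 5 ^ 3 = σ 0 * σ 5 * σ 5 ^ 2 := by
    rw [pow_succ', mul_assoc]
  refine ⟨⟨?_, ?_, ?_, ?_, ?_⟩, ⟨?_, ?_⟩, ⟨?_, ?_⟩, ⟨?_, ?_⟩⟩
  iterate 5 exact hσ.pow_four_eq (by decide) (by decide)
  · exact (hσ.mul_antipode 1).symm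
  · exact (hσ.mul_antipode 1).trans (hσ.mul_antipode 2).symm
  · exact (hσ.sq_octo_mul_sq (i := 0) (j := 4) (by decide) (by decide)).trans h0.symm
  · exact h0.trans (hσ.sq_octo_mul_sq (i := 0) (j := 1) (by decide) (by decide)).symm
  · exact (hσ.sq_octo_mul_sq (i := 5) (j := 1) (by decide) (by decide)).trans h5.symm
  · exact h5.trans (hσ.sq_octo_mul_sq (i := 5) (j := 2) (by decide) (by decide)).symm

/-- If `(σ_i)_{1≤i≤6}` (here `σ_i = σ (i−1)`) is a family of type
`𝔒` in a group `G`, then: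
(i) `σ₁⁴ = σ₂⁴ = σ₃⁴ = σ₄⁴ = σ₅⁴ = σ₆⁴`;
(ii) `σ₁σ₆ = σ₂σ₄ = σ₃σ₅`;
(iii) `σ₂²σ₅² = σ₁³σ₆ = σ₃²σ₂²`;
(iv) `σ₅²σ₂² = σ₁σ₆³ = σ₂²σ₃²`. -/
theorem stmt18 {G : Type*} [Group G] (σ : Fin 6 → G)
    (hinj : Function.Injective σ)
    (hO : ∀ i j : Fin 6, σ i * σ j * (σ i)⁻¹ = σ (octo i j)) :
    (σ 0 ^ 4 = σ 1 ^ 4 ∧ σ 1 ^ 4 = σ 2 ^ 4 ∧ σ 2 ^ 4 = σ 3 ^ 4 ∧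
      σ 3 ^ 4 = σ 4 ^ 4 ∧ σ 4 ^ 4 = σ 5 ^ 4) ∧
    (σ 0 * σ 5 = σ 1 * σ 3 ∧ σ 1 * σ 3 = σ 2 * σ 4) ∧
    (σ 1 ^ 2 * σ 4 ^ 2 = σ 0 ^ 3 * σ 5 ∧ σ 0 ^ 3 * σ 5 = σ 2 ^ 2 * σ 1 ^ 2) ∧
    (σ 4 ^ 2 * σ 1 ^ 2 = σ 0 * σ 5 ^ 3 ∧ σ 0 * σ 5 ^ 3 = σ 1 ^ 2 * σ 2 ^ 2) :=
  stmt18_general σ hO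
end

section
/- Let (σ,τ) be of type 𝔒^{(2)} in a group G, i.e., (σ_i)_{1≤i≤6} and (τ_i)_{1≤i≤6} are each of type 𝔒 and σ_i τ_j σ_i⁻¹ = τ_{i▷j}, τ_i σ_j τ_i⁻¹ = σ_{i▷j} for all i, j. Then: (i) σ₁τ₆ = σ₆τ₁ = σ₂τ₄ = σ₄τ₂ = σ₃τ₅ = σ₅τ₃; (ii) σ_j⁻¹τ_j = σ₁⁻¹τ₁ for 2 ≤ j ≤ 6; (iii) τ₂⁻²σ₅τ₅ = τ₁⁻¹σ₆; (iv) τ₂⁻²σ₃τ₃ = σ₁τ₆⁻¹; (v) σ₂⁻²σ₅τ₅ = σ₁⁻²τ₁σ₆; (vi) σ₂⁻²σ₃τ₃ = τ₁σ₆⁻¹. -/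
/-!
Indices are 1-based here, as in the statement (`σ_i` is `σ (i - 1)` in the code). The crossed
relations say that `σ_j` and `τ_j` induce the same conjugation on the `σ`'s, so `z_j = σ_j⁻¹ τ_j`
centralizes every `σ_k`. Conjugating by `σ_i` then sends `z_j` to `z_{i▷j}`, and since the
octahedral rack is connected all `z_j` equal one element `z`. Hence `τ_j = σ_j z` with `z`
commuting with every `σ_k`, and each identity reduces to a relation among the `σ`'s alone:
`σ₁σ₆` is centralized by all `σ_k`, so it is invariant under the rack action, and the braid
relations of the rack give `σ₂²σ₆ = σ₅²σ₁` and `σ₃²σ₆ = σ₂²σ₁`.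
-/

section Rack

variable {G ι : Type*} [Group G] {op : ι → ι → ι} {σ τ : ι → G}

theorem commute_inv_mul_of_conj_eq {a b x : G} (h : b * x * b⁻¹ = a * x * a⁻¹) :
    Commute (a⁻¹ * b) x :=
  calc a⁻¹ * b * x = a⁻¹ * (b * x * b⁻¹) * b := by group
    _ = a⁻¹ * (a * x * a⁻¹) * b := by rw [h]
    _ = x * (a⁻¹ * b) := by group

theorem mul_eq_mul_of_conj (hσ : ∀ i j, σ i * σ j * (σ i)⁻¹ = σ (op i j)) (i j : ι) :
    σ i * σ j = σ (op i j) * σ i :=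
  mul_inv_eq_iff_eq_mul.mp (hσ i j)

theorem commute_twist (hσ : ∀ i j, σ i * σ j * (σ i)⁻¹ = σ (op i j))
    (hτσ : ∀ i j, τ i * σ j * (τ i)⁻¹ = σ (op i j)) (j k : ι) :
    Commute ((σ j)⁻¹ * τ j) (σ k) :=
  commute_inv_mul_of_conj_eq ((hτσ j k).trans (hσ j k).symm)

theorem twist_op (hσ : ∀ i j, σ i * σ j * (σ i)⁻¹ = σ (op i j))
    (hστ : ∀ i j, σ i * τ j * (σ i)⁻¹ = τ (op i j))
    (hτσ : ∀ i j, τ i * σ j * (τ i)⁻¹ = σ (op i j)) (i j : ι) :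
    (σ (op i j))⁻¹ * τ (op i j) = (σ j)⁻¹ * τ j := by
  rw [← hσ, ← hστ]
  calc (σ i * σ j * (σ i)⁻¹)⁻¹ * (σ i * τ j * (σ i)⁻¹)
      = σ i * ((σ j)⁻¹ * τ j) * (σ i)⁻¹ := by group
    _ = (σ j)⁻¹ * τ j := by
      rw [(commute_twist hσ hτσ j i).symm.eq, mul_inv_cancel_right]

end Rack

section Octahedral

variable {G : Type*} [Group G] {σ : Fin 6 → G}

theorem octo_orbit_zero : ∀ j : Fin 6, ∃ k l, octo k (octo l 0) = j := by decide

theorem twist_eq_twist_zero {τ : Fin 6 → G} (hσ : ∀ i j, σ i * σ j * (σ i)⁻¹ = σ (octo i j))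
    (hστ : ∀ i j, σ i * τ j * (σ i)⁻¹ = τ (octo i j))
    (hτσ : ∀ i j, τ i * σ j * (τ i)⁻¹ = σ (octo i j)) (j : Fin 6) :
    (σ j)⁻¹ * τ j = (σ 0)⁻¹ * τ 0 := by
  obtain ⟨k, l, rfl⟩ := octo_orbit_zero j
  rw [twist_op hσ hστ hτσ, twist_op hσ hστ hτσ]

theorem octo_commute_center (hσ : ∀ i j, σ i * σ j * (σ i)⁻¹ = σ (octo i j))
    (k : Fin 6) : Commute (σ 0 * σ 5) (σ k) := by
  have hmul := mul_eq_mul_of_conj hσ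
  have hfix : octo 0 (octo 5 k) = k := by revert k; decide
  calc σ 0 * σ 5 * σ k = σ 0 * σ (octo 5 k) * σ 5 := by rw [mul_assoc, hmul, ← mul_assoc]
    _ = σ k * (σ 0 * σ 5) := by rw [hmul, hfix, mul_assoc]

theorem octo_center_invariant (hσ : ∀ i j, σ i * σ j * (σ i)⁻¹ = σ (octo i j))
    (i : Fin 6) : σ (octo i 0) * σ (octo i 5) = σ 0 * σ 5 := by
  rw [← hσ, ← hσ]
  calc σ i * σ 0 * (σ i)⁻¹ * (σ i * σ 5 * (σ i)⁻¹)
      = σ i * (σ 0 * σ 5) * (σ i)⁻¹ := by group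
    _ = σ 0 * σ 5 := by rw [(octo_commute_center hσ i).symm.eq, mul_inv_cancel_right]

theorem octo_braid_four (hσ : ∀ i j, σ i * σ j * (σ i)⁻¹ = σ (octo i j)) :
    σ 1 * σ 1 * σ 5 = σ 4 * σ 4 * σ 0 := by
  have h15 : σ 1 * σ 5 = σ 4 * σ 1 := mul_eq_mul_of_conj hσ 1 5
  have h14 : σ 1 * σ 4 = σ 0 * σ 1 := mul_eq_mul_of_conj hσ 1 4
  have h40 : σ 4 * σ 0 = σ 1 * σ 4 := mul_eq_mul_of_conj hσ 4 0
  calc σ 1 * σ 1 * σ 5 = σ 1 * σ 4 * σ 1 := by rw [mul_assoc, h15, ← mul_assoc]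
    _ = σ 4 * σ 0 * σ 1 := by rw [h40]
    _ = σ 4 * σ 1 * σ 4 := by rw [mul_assoc, ← h14, ← mul_assoc]
    _ = σ 4 * σ 4 * σ 0 := by rw [mul_assoc, ← h40, ← mul_assoc]

theorem octo_braid_two (hσ : ∀ i j, σ i * σ j * (σ i)⁻¹ = σ (octo i j)) :
    σ 2 * σ 2 * σ 5 = σ 1 * σ 1 * σ 0 := by
  have h25 : σ 2 * σ 5 = σ 1 * σ 2 := mul_eq_mul_of_conj hσ 2 5
  have h12 : σ 1 * σ 2 = σ 5 * σ 1 := mul_eq_mul_of_conj hσ 1 2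
  have h10 : σ 1 * σ 0 = σ 2 * σ 1 := mul_eq_mul_of_conj hσ 1 0
  calc σ 2 * σ 2 * σ 5 = σ 2 * σ 1 * σ 2 := by rw [mul_assoc, h25, ← mul_assoc]
    _ = σ 2 * σ 5 * σ 1 := by rw [mul_assoc, h12, ← mul_assoc]
    _ = σ 1 * σ 2 * σ 1 := by rw [h25]
    _ = σ 1 * σ 1 * σ 0 := by rw [mul_assoc, ← h10, ← mul_assoc]

theorem octo_inv_sq_mul_sq_four (hσ : ∀ i j, σ i * σ j * (σ i)⁻¹ = σ (octo i j)) :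
    (σ 1 ^ 2)⁻¹ * σ 4 * σ 4 = (σ 0)⁻¹ * σ 5 := by
  have h05 : Commute (σ 0) (σ 5) := mul_eq_mul_of_conj hσ 0 5
  calc (σ 1 ^ 2)⁻¹ * σ 4 * σ 4 = (σ 1 ^ 2)⁻¹ * (σ 4 * σ 4 * σ 0) * (σ 0)⁻¹ := by group
    _ = (σ 1 ^ 2)⁻¹ * (σ 1 * σ 1 * σ 5) * (σ 0)⁻¹ := by rw [octo_braid_four hσ]
    _ = σ 5 * (σ 0)⁻¹ := by group
    _ = (σ 0)⁻¹ * σ 5 := h05.inv_left.eq.symm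

theorem octo_inv_sq_mul_sq_two (hσ : ∀ i j, σ i * σ j * (σ i)⁻¹ = σ (octo i j)) :
    (σ 1 ^ 2)⁻¹ * σ 2 * σ 2 = σ 0 * (σ 5)⁻¹ :=
  calc (σ 1 ^ 2)⁻¹ * σ 2 * σ 2 = (σ 1 ^ 2)⁻¹ * (σ 2 * σ 2 * σ 5) * (σ 5)⁻¹ := by group
    _ = (σ 1 ^ 2)⁻¹ * (σ 1 * σ 1 * σ 0) * (σ 5)⁻¹ := by rw [octo_braid_two hσ]
    _ = σ 0 * (σ 5)⁻¹ := by group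

end Octahedral

section Twisted

variable {G : Type*} [Group G] {σ τ : Fin 6 → G} {z : G}

theorem twisted_products (hσ : ∀ i j, σ i * σ j * (σ i)⁻¹ = σ (octo i j))
    (ht : ∀ j, τ j = σ j * z) :
    σ 0 * τ 5 = σ 5 * τ 0 ∧ σ 5 * τ 0 = σ 1 * τ 3 ∧ σ 1 * τ 3 = σ 3 * τ 1 ∧
      σ 3 * τ 1 = σ 2 * τ 4 ∧ σ 2 * τ 4 = σ 4 * τ 2 := by
  have h50 : σ 5 * σ 0 = σ 0 * σ 5 := (mul_eq_mul_of_conj hσ 0 5).symm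
  have h13 : σ 1 * σ 3 = σ 0 * σ 5 := octo_center_invariant hσ 4
  have h31 : σ 3 * σ 1 = σ 0 * σ 5 := octo_center_invariant hσ 2
  have h24 : σ 2 * σ 4 = σ 0 * σ 5 := octo_center_invariant hσ 1
  have h42 : σ 4 * σ 2 = σ 0 * σ 5 := octo_center_invariant hσ 3
  simp only [ht, ← mul_assoc, h50, h13, h31, h24, h42, and_self]

theorem twisted_sigma_sq_four (hσ : ∀ i j, σ i * σ j * (σ i)⁻¹ = σ (octo i j))
    (hz : ∀ k, Commute z (σ k)) (ht : ∀ j, τ j = σ j * z) :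
    (σ 1 ^ 2)⁻¹ * σ 4 * τ 4 = (σ 0 ^ 2)⁻¹ * τ 0 * σ 5 :=
  calc (σ 1 ^ 2)⁻¹ * σ 4 * τ 4 = (σ 0)⁻¹ * σ 5 * z := by
        rw [ht, ← mul_assoc, octo_inv_sq_mul_sq_four hσ]
    _ = (σ 0)⁻¹ * z * σ 5 := by rw [mul_assoc, ← (hz 5).eq, ← mul_assoc]
    _ = (σ 0 ^ 2)⁻¹ * τ 0 * σ 5 := by rw [ht]; group

theorem twisted_sigma_sq_two (hσ : ∀ i j, σ i * σ j * (σ i)⁻¹ = σ (octo i j))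
    (hz : ∀ k, Commute z (σ k)) (ht : ∀ j, τ j = σ j * z) :
    (σ 1 ^ 2)⁻¹ * σ 2 * τ 2 = τ 0 * (σ 5)⁻¹ :=
  calc (σ 1 ^ 2)⁻¹ * σ 2 * τ 2 = σ 0 * (σ 5)⁻¹ * z := by
        rw [ht, ← mul_assoc, octo_inv_sq_mul_sq_two hσ]
    _ = τ 0 * (σ 5)⁻¹ := by rw [mul_assoc, ← (hz 5).inv_right.eq, ← mul_assoc, ht]

theorem twisted_tau_sq_four (hσ : ∀ i j, σ i * σ j * (σ i)⁻¹ = σ (octo i j))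
    (hz : ∀ k, Commute z (σ k)) (ht : ∀ j, τ j = σ j * z) :
    (τ 1 ^ 2)⁻¹ * σ 4 * τ 4 = (τ 0)⁻¹ * σ 5 :=
  calc (τ 1 ^ 2)⁻¹ * σ 4 * τ 4 = (z ^ 2)⁻¹ * ((σ 1 ^ 2)⁻¹ * σ 4 * τ 4) := by
        rw [ht 1, (hz 1).symm.mul_pow]; group
    _ = (z ^ 2)⁻¹ * ((σ 0)⁻¹ * z) * σ 5 := by rw [twisted_sigma_sq_four hσ hz ht, ht]; group
    _ = (z ^ 2)⁻¹ * (z * (σ 0)⁻¹) * σ 5 := by rw [(hz 0).inv_right.eq]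
    _ = (τ 0)⁻¹ * σ 5 := by rw [ht]; group

theorem twisted_tau_sq_two (hσ : ∀ i j, σ i * σ j * (σ i)⁻¹ = σ (octo i j))
    (hz : ∀ k, Commute z (σ k)) (ht : ∀ j, τ j = σ j * z) :
    (τ 1 ^ 2)⁻¹ * σ 2 * τ 2 = σ 0 * (τ 5)⁻¹ :=
  calc (τ 1 ^ 2)⁻¹ * σ 2 * τ 2 = (z ^ 2)⁻¹ * ((σ 1 ^ 2)⁻¹ * σ 2 * τ 2) := by
        rw [ht 1, (hz 1).symm.mul_pow]; group
    _ = (z ^ 2)⁻¹ * σ 0 * (z * (σ 5)⁻¹) := by rw [twisted_sigma_sq_two hσ hz ht, ht]; group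
    _ = σ 0 * (z ^ 2)⁻¹ * (z * (σ 5)⁻¹) := by rw [((hz 0).pow_left 2).inv_left.eq]
    _ = σ 0 * (τ 5)⁻¹ := by rw [ht]; group

end Twisted

theorem stmt19_general {G : Type*} [Group G] (σ τ : Fin 6 → G)
    (hσ : ∀ i j : Fin 6, σ i * σ j * (σ i)⁻¹ = σ (octo i j))
    (hστ : ∀ i j : Fin 6, σ i * τ j * (σ i)⁻¹ = τ (octo i j))
    (hτσ : ∀ i j : Fin 6, τ i * σ j * (τ i)⁻¹ = σ (octo i j)) :
    (σ 0 * τ 5 = σ 5 * τ 0 ∧ σ 5 * τ 0 = σ 1 * τ 3 ∧ σ 1 * τ 3 = σ 3 * τ 1 ∧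
      σ 3 * τ 1 = σ 2 * τ 4 ∧ σ 2 * τ 4 = σ 4 * τ 2) ∧
    (∀ j : Fin 6, (σ j)⁻¹ * τ j = (σ 0)⁻¹ * τ 0) ∧
    ((τ 1 ^ 2)⁻¹ * σ 4 * τ 4 = (τ 0)⁻¹ * σ 5) ∧
    ((τ 1 ^ 2)⁻¹ * σ 2 * τ 2 = σ 0 * (τ 5)⁻¹) ∧
    ((σ 1 ^ 2)⁻¹ * σ 4 * τ 4 = (σ 0 ^ 2)⁻¹ * τ 0 * σ 5) ∧
    ((σ 1 ^ 2)⁻¹ * σ 2 * τ 2 = τ 0 * (σ 5)⁻¹) := by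
  have htwist := twist_eq_twist_zero hσ hστ hτσ
  have hz : ∀ k, Commute ((σ 0)⁻¹ * τ 0) (σ k) := commute_twist hσ hτσ 0
  have ht : ∀ j, τ j = σ j * ((σ 0)⁻¹ * τ 0) := fun j => by
    rw [← htwist j, mul_inv_cancel_left]
  exact ⟨twisted_products hσ ht, htwist, twisted_tau_sq_four hσ hz ht,
    twisted_tau_sq_two hσ hz ht, twisted_sigma_sq_four hσ hz ht, twisted_sigma_sq_two hσ hz ht⟩

/-- If `(σ, τ)` is of type `𝔒^{(2)}` in a group `G`
(twelve distinct elements, both families of type `𝔒`, and the crossed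
conjugation relations hold; here `σ_i = σ (i−1)`, `τ_i = τ (i−1)`), then:
(i) `σ₁τ₆ = σ₆τ₁ = σ₂τ₄ = σ₄τ₂ = σ₃τ₅ = σ₅τ₃`;
(ii) `σ_j⁻¹τ_j = σ₁⁻¹τ₁` for all `j`;
(iii) `τ₂⁻²σ₅τ₅ = τ₁⁻¹σ₆`;
(iv) `τ₂⁻²σ₃τ₃ = σ₁τ₆⁻¹`;
(v) `σ₂⁻²σ₅τ₅ = σ₁⁻²τ₁σ₆`;
(vi) `σ₂⁻²σ₃τ₃ = τ₁σ₆⁻¹`. -/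
theorem stmt19 {G : Type*} [Group G] (σ τ : Fin 6 → G)
    (hinjσ : Function.Injective σ) (hinjτ : Function.Injective τ)
    (hστdisj : ∀ i j : Fin 6, σ i ≠ τ j)
    (hσ : ∀ i j : Fin 6, σ i * σ j * (σ i)⁻¹ = σ (octo i j))
    (hτ : ∀ i j : Fin 6, τ i * τ j * (τ i)⁻¹ = τ (octo i j))
    (hστ : ∀ i j : Fin 6, σ i * τ j * (σ i)⁻¹ = τ (octo i j))
    (hτσ : ∀ i j : Fin 6, τ i * σ j * (τ i)⁻¹ = σ (octo i j)) :
    (σ 0 * τ 5 = σ 5 * τ 0 ∧ σ 5 * τ 0 = σ 1 * τ 3 ∧ σ 1 * τ 3 = σ 3 * τ 1 ∧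
      σ 3 * τ 1 = σ 2 * τ 4 ∧ σ 2 * τ 4 = σ 4 * τ 2) ∧
    (∀ j : Fin 6, (σ j)⁻¹ * τ j = (σ 0)⁻¹ * τ 0) ∧
    ((τ 1 ^ 2)⁻¹ * σ 4 * τ 4 = (τ 0)⁻¹ * σ 5) ∧
    ((τ 1 ^ 2)⁻¹ * σ 2 * τ 2 = σ 0 * (τ 5)⁻¹) ∧
    ((σ 1 ^ 2)⁻¹ * σ 4 * τ 4 = (σ 0 ^ 2)⁻¹ * τ 0 * σ 5) ∧
    ((σ 1 ^ 2)⁻¹ * σ 2 * τ 2 = τ 0 * (σ 5)⁻¹) :=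
  stmt19_general σ τ hσ hστ hτσ
end
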